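/- arXiv:1502.03316 — 8 statements merged into one kernel-verified Lean document; each statement's English description precedes it below -/
import Mathlib

section
/- Let F be a nonempty finite set of edges of a finite simple graph on vertex set {1,...,n}, with points x_e = e_i + e_j ∈ ℝ^n for each edge e = {i,j} ∈ F. Then for every point c ∈ ℝ^n, the total squared distance of the points of F to c is at least Cost(F): ∑_{e∈F} ‖x_e − c‖² ≥ ∑_u d_F(u)·(1 − d_F(u)/m_F), where m_F = |F| and d_F(u) is the degree of u in F. -/
/-- The point `x_e = e_i + e_j ∈ ℝ^n` associated to the edge `e = {i,j}`. -/
noncomputable def edgePoint {n : ℕ} (e : Sym2 (Fin n)) : EuclideanSpace ℝ (Fin n) :=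
  Sym2.lift ⟨fun i j => EuclideanSpace.single i (1 : ℝ) + EuclideanSpace.single j 1,
    fun _ _ => add_comm _ _⟩ e

/-- The degree of a vertex `u` with respect to a finite set `F` of edges. -/
def degIn {V : Type*} [DecidableEq V] (F : Finset (Sym2 V)) (u : V) : ℕ :=
  (F.filter (fun e => u ∈ e)).card

open Finset

/-!
Coordinatewise, `x_e(u)` is the indicator of `u ∈ e`, so the `u`-th coordinate contributes
`d (1 - c_u)^2 + (m - d) c_u^2` with `d = d_F(u)`, `m = m_F`. As a function of `c_u` this
quadratic is minimised at the mean `c_u = d / m`, where it equals `d (1 - d / m)`.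
-/

lemma edgePoint_apply {n : ℕ} {e : Sym2 (Fin n)} (he : ¬ e.IsDiag) (u : Fin n) :
    edgePoint e u = if u ∈ e then 1 else 0 := by
  induction e using Sym2.inductionOn with
  | hf i j =>
    rw [Sym2.mk_isDiag_iff] at he
    change EuclideanSpace.single i (1 : ℝ) u + EuclideanSpace.single j (1 : ℝ) u = _
    rw [PiLp.single_apply, PiLp.single_apply]
    by_cases hui : u = i <;> by_cases huj : u = j <;> simp_all [Sym2.mem_iff]

lemma sum_sq_indicator_sub {α : Type*} (s : Finset α) (p : α → Prop) [DecidablePred p]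
    (x : ℝ) :
    ∑ a ∈ s, ((if p a then 1 else 0) - x) ^ 2 =
      #(s.filter p) * (1 - x) ^ 2 + (#s - #(s.filter p)) * x ^ 2 := by
  have hcard : (#s : ℝ) - #(s.filter p) = #(s.filter (¬ p ·)) := by
    rw [sub_eq_iff_eq_add', ← Nat.cast_add, card_filter_add_card_filter_not]
  simp only [apply_ite (· - x), apply_ite (· ^ 2), sum_ite, sum_const,
    nsmul_eq_mul, hcard]
  ring

lemma mul_one_sub_div_le {d m : ℝ} (hd : 0 ≤ d) (hdm : d ≤ m) (x : ℝ) :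
    d * (1 - d / m) ≤ d * (1 - x) ^ 2 + (m - d) * x ^ 2 := by
  rcases (hd.trans hdm).eq_or_lt with hm | hm
  · obtain rfl : d = 0 := by linarith
    simp [← hm]
  have hgap : d * (1 - x) ^ 2 + (m - d) * x ^ 2 - d * (1 - d / m) = (m * x - d) ^ 2 / m := by
    field_simp
    ring
  rw [← sub_nonneg, hgap]
  positivity

theorem sum_sq_dist_to_point_ge_cost_general {n : ℕ} (F : Finset (Sym2 (Fin n)))
    (hsimple : ∀ e ∈ F, ¬ e.IsDiag) (c : EuclideanSpace ℝ (Fin n)) :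
    ∑ e ∈ F, ‖edgePoint e - c‖ ^ 2 ≥
      ∑ u : Fin n, (degIn F u : ℝ) * (1 - (degIn F u : ℝ) / (F.card : ℝ)) := by
  calc ∑ e ∈ F, ‖edgePoint e - c‖ ^ 2
      = ∑ e ∈ F, ∑ u, ((if u ∈ e then 1 else 0) - c u) ^ 2 := by
        refine sum_congr rfl fun e he => ?_
        simp only [EuclideanSpace.norm_sq_eq, PiLp.sub_apply, Real.norm_eq_abs, sq_abs,
          edgePoint_apply (hsimple e he)]
    _ = ∑ u, ∑ e ∈ F, ((if u ∈ e then 1 else 0) - c u) ^ 2 := sum_comm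
    _ ≥ ∑ u, (degIn F u : ℝ) * (1 - (degIn F u : ℝ) / (F.card : ℝ)) := by
        refine sum_le_sum fun u _ => ?_
        rw [sum_sq_indicator_sub]
        exact mul_one_sub_div_le (Nat.cast_nonneg _) (Nat.cast_le.mpr (card_filter_le F _)) _

/-- For a nonempty finite set `F` of edges of a simple graph on `{1,…,n}` and any point
`c ∈ ℝ^n`, the total squared distance of the points `x_e`, `e ∈ F`, to `c` is at least
`Cost(F) = ∑_u d_F(u)·(1 − d_F(u)/m_F)`. -/
theorem sum_sq_dist_to_point_ge_cost {n : ℕ} (F : Finset (Sym2 (Fin n)))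
    (hF : F.Nonempty) (hsimple : ∀ e ∈ F, ¬ e.IsDiag) (c : EuclideanSpace ℝ (Fin n)) :
    ∑ e ∈ F, ‖edgePoint e - c‖ ^ 2 ≥
      ∑ u : Fin n, (degIn F u : ℝ) * (1 - (degIn F u : ℝ) / (F.card : ℝ)) :=
  sum_sq_dist_to_point_ge_cost_general F hsimple c
end

section
/- Let G = (V,E) be a finite simple graph on vertex set {1,...,n} with m edges, and suppose the minimum vertex cover of G has size k ≥ 1. Then the edge set E can be partitioned into exactly k nonempty parts F_1, ..., F_k, each of which is a star (all edges of the part share a common vertex), such that the total k-means cost of the corresponding clustering of the points {x_e : e ∈ E}, with each cluster connected to its centroid, is exactly m − k; in particular ∑_{i=1}^k ∑_{e∈F_i} ‖x_e − μ_i‖² = m − k, where μ_i is the centroid of {x_e : e ∈ F_i}. -/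
/-- `S` is a vertex cover of the simple graph `G`: every edge has an endpoint in `S`. -/
def IsVertexCover {V : Type*} (G : SimpleGraph V) (S : Finset V) : Prop :=
  ∀ ⦃u v : V⦄, G.Adj u v → u ∈ S ∨ v ∈ S

/-!
Send every edge to an endpoint lying in the minimum cover `S`. The fibres are stars centred at
the vertices of `S`, and none is empty: by minimality each `v ∈ S` has a neighbour outside `S`,
and that edge can only go to `v`. In the star at `v` the points are `e_v + e_w` for distinct `w`;
translating by `e_v` does not change the cost, and an orthonormal family of size `c` has cost
`c - 1` about its centroid. Summing over the `k` stars gives `m - k`.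
-/

open Finset

section ClusterCost

variable {α β E : Type*} [NormedAddCommGroup E] [InnerProductSpace ℝ E]

noncomputable def clusterCost (F : Finset α) (x : α → E) : ℝ :=
  ∑ a ∈ F, ‖x a - (#F : ℝ)⁻¹ • ∑ b ∈ F, x b‖ ^ 2

theorem clusterCost_eq_sum_norm_sq_sub {F : Finset α} (hF : F.Nonempty) (x : α → E) :
    clusterCost F x = ∑ a ∈ F, ‖x a‖ ^ 2 - (#F : ℝ)⁻¹ * ‖∑ a ∈ F, x a‖ ^ 2 := by
  have hc : (#F : ℝ) ≠ 0 := by exact_mod_cast hF.card_ne_zero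
  unfold clusterCost
  set s := ∑ a ∈ F, x a
  have hinner : ∑ a ∈ F, inner ℝ (x a) ((#F : ℝ)⁻¹ • s) = (#F : ℝ)⁻¹ * ‖s‖ ^ 2 := by
    rw [← sum_inner, real_inner_smul_right, real_inner_self_eq_norm_sq]
  have hnorm : ‖(#F : ℝ)⁻¹ • s‖ ^ 2 = (#F : ℝ)⁻¹ ^ 2 * ‖s‖ ^ 2 := by
    rw [norm_smul, mul_pow, norm_inv, Real.norm_natCast]
  simp only [norm_sub_sq_real, sum_add_distrib, sum_sub_distrib,
    ← mul_sum, hinner, hnorm, sum_const, nsmul_eq_mul]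
  field_simp
  ring

theorem clusterCost_const_add (F : Finset α) (u : E) (x : α → E) :
    clusterCost F (fun a => u + x a) = clusterCost F x := by
  rcases F.eq_empty_or_nonempty with rfl | hF
  · simp [clusterCost]
  have hc : (#F : ℝ) ≠ 0 := by exact_mod_cast hF.card_ne_zero
  have hcentroid : (#F : ℝ)⁻¹ • ∑ a ∈ F, (u + x a) = u + (#F : ℝ)⁻¹ • ∑ a ∈ F, x a := by
    rw [sum_add_distrib, sum_const, ← Nat.cast_smul_eq_nsmul ℝ, smul_add,
      smul_smul, inv_mul_cancel₀ hc, one_smul]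
  simp only [clusterCost, hcentroid, add_sub_add_left_eq_sub]

theorem clusterCost_image [DecidableEq β] {F : Finset α} {g : α → β} (hg : Set.InjOn g F)
    (x : β → E) : clusterCost (F.image g) x = clusterCost F (x ∘ g) := by
  simp only [clusterCost, card_image_of_injOn hg, sum_image hg, Function.comp_apply]

theorem Orthonormal.clusterCost_eq {v : α → E} (hv : Orthonormal ℝ v) {F : Finset α}
    (hF : F.Nonempty) : clusterCost F v = #F - 1 := by
  have hc : (#F : ℝ) ≠ 0 := by exact_mod_cast hF.card_ne_zero
  have hsum : ‖∑ a ∈ F, v a‖ ^ 2 = #F := by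
    simpa using hv.inner_sum (fun _ => (1 : ℝ)) (fun _ => 1) F
  rw [clusterCost_eq_sum_norm_sq_sub hF, hsum, sum_congr rfl fun a _ => by rw [hv.1 a]]
  field_simp
  simp

end ClusterCost

theorem edgePoint_mk {n : ℕ} (i j : Fin n) :
    edgePoint s(i, j) = EuclideanSpace.single i (1 : ℝ) + EuclideanSpace.single j 1 :=
  rfl

theorem clusterCost_edgePoint_of_forall_mem {n : ℕ} {F : Finset (Sym2 (Fin n))}
    (hF : F.Nonempty) {v : Fin n} (hv : ∀ e ∈ F, v ∈ e) :
    clusterCost F edgePoint = #F - 1 := by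
  set T : Finset (Fin n) := {w | s(v, w) ∈ F}
  have hinj : Set.InjOn (fun w => s(v, w)) T := fun _ _ _ _ h => Sym2.congr_right.1 h
  have hFT : F = T.image fun w => s(v, w) := by
    ext e
    simp only [T, mem_image, mem_filter, mem_univ, true_and]
    constructor
    · intro he
      obtain ⟨w, rfl⟩ := Sym2.mem_iff_exists.1 (hv e he)
      exact ⟨w, he, rfl⟩
    · rintro ⟨w, hw, rfl⟩
      exact hw
  have hT : T.Nonempty := image_nonempty.1 (hFT ▸ hF)
  rw [hFT, clusterCost_image hinj, card_image_of_injOn hinj, Function.comp_def]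
  simp only [edgePoint_mk]
  rw [clusterCost_const_add, EuclideanSpace.orthonormal_single.clusterCost_eq hT]

theorem sum_clusterCost_fiberwise_edgePoint {n : ℕ} {E : Finset (Sym2 (Fin n))}
    {S : Finset (Fin n)} {f : Sym2 (Fin n) → Fin n} (hf : ∀ e ∈ E, f e ∈ S ∧ f e ∈ e)
    (hsurj : Set.SurjOn f E S) :
    ∑ v ∈ S, clusterCost {e ∈ E | f e = v} edgePoint = #E - #S := by
  have hfiber : ∀ v ∈ S, clusterCost {e ∈ E | f e = v} edgePoint = #{e ∈ E | f e = v} - 1 := by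
    intro v hv
    obtain ⟨e₀, he₀, hfe₀⟩ := hsurj hv
    refine clusterCost_edgePoint_of_forall_mem (v := v) ⟨e₀, mem_filter.2 ⟨he₀, hfe₀⟩⟩
      fun e he => ?_
    obtain ⟨heE, rfl⟩ := mem_filter.1 he
    exact (hf e heE).2
  rw [sum_congr rfl hfiber, sum_sub_distrib, card_eq_sum_card_fiberwise fun e he => (hf e he).1]
  simp

section VertexCover

variable {V : Type*} {G : SimpleGraph V} {S : Finset V}

theorem IsVertexCover.exists_endpoint_mem (hS : IsVertexCover G S) :
    ∃ f : Sym2 V → V, ∀ e ∈ G.edgeSet, f e ∈ S ∧ f e ∈ e := by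
  have h : ∀ e : Sym2 V, ∃ v, e ∈ G.edgeSet → v ∈ S ∧ v ∈ e := by
    refine Sym2.ind fun a b => ?_
    by_cases ha : a ∈ S
    · exact ⟨a, fun _ => ⟨ha, Sym2.mem_mk_left a b⟩⟩
    · exact ⟨b, fun hab => ⟨(hS hab).resolve_left ha, Sym2.mem_mk_right a b⟩⟩
  choose f hf using h
  exact ⟨f, hf⟩

theorem IsVertexCover.exists_adj_notMem [DecidableEq V] (hS : IsVertexCover G S)
    (hmin : ∀ T, IsVertexCover G T → #S ≤ #T) {v : V} (hv : v ∈ S) :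
    ∃ w, G.Adj v w ∧ w ∉ S := by
  have hcover : ¬IsVertexCover G (S.erase v) := fun h => by
    have := hmin _ h
    rw [card_erase_of_mem hv] at this
    have := card_pos.2 ⟨v, hv⟩
    omega
  simp only [IsVertexCover, mem_erase, not_forall, not_or, not_and', not_not] at hcover
  obtain ⟨a, b, hab, ha, hb⟩ := hcover
  rcases hS hab with haS | hbS
  · obtain rfl := ha haS
    exact ⟨b, hab, fun hbS => hab.ne (hb hbS).symm⟩
  · obtain rfl := hb hbS
    exact ⟨a, hab.symm, fun haS => hab.ne (ha haS)⟩

theorem IsVertexCover.surjOn_of_forall_card_le [DecidableEq V] (hS : IsVertexCover G S)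
    (hmin : ∀ T, IsVertexCover G T → #S ≤ #T) {f : Sym2 V → V}
    (hf : ∀ e ∈ G.edgeSet, f e ∈ S ∧ f e ∈ e) : Set.SurjOn f G.edgeSet S := by
  intro v hv
  obtain ⟨w, hvw, hw⟩ := hS.exists_adj_notMem hmin hv
  have he : s(v, w) ∈ G.edgeSet := hvw
  refine ⟨s(v, w), he, ?_⟩
  obtain ⟨hfS, hfe⟩ := hf _ he
  exact (Sym2.mem_iff.1 hfe).resolve_right fun h => hw (h ▸ hfS)

end VertexCover

theorem exists_star_partition_cost_eq_general {n : ℕ} (G : SimpleGraph (Fin n))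
    [DecidableRel G.Adj] (k : ℕ)
    (S : Finset (Fin n)) (hS : IsVertexCover G S) (hcard : S.card = k)
    (hmin : ∀ T : Finset (Fin n), IsVertexCover G T → k ≤ T.card) :
    ∃ P : Fin k → Finset (Sym2 (Fin n)),
      (∀ i, (P i).Nonempty) ∧
      (∀ i j, i ≠ j → Disjoint (P i) (P j)) ∧
      (∀ e, e ∈ G.edgeFinset ↔ ∃ i, e ∈ P i) ∧
      (∀ i, ∃ v : Fin n, ∀ e ∈ P i, v ∈ e) ∧
      ∑ i : Fin k, ∑ e ∈ P i,
          ‖edgePoint e - ((P i).card : ℝ)⁻¹ • ∑ e' ∈ P i, edgePoint e'‖ ^ 2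
        = (G.edgeFinset.card : ℝ) - k := by
  classical
  obtain ⟨f, hf⟩ := hS.exists_endpoint_mem
  have hfE : ∀ e ∈ G.edgeFinset, f e ∈ S ∧ f e ∈ e := fun e he =>
    hf e (SimpleGraph.mem_edgeFinset.1 he)
  have hsurj := G.coe_edgeFinset ▸ hS.surjOn_of_forall_card_le (hcard ▸ hmin) hf
  let σ : Fin k ≃ S := (S.equivFinOfCardEq hcard).symm
  refine ⟨fun i => {e ∈ G.edgeFinset | f e = σ i}, fun i => ?_, fun i j hij => ?_, fun e => ?_,
    fun i => ⟨σ i, fun e he => ?_⟩, ?_⟩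
  · obtain ⟨e, he, hfe⟩ := hsurj (σ i).2
    exact ⟨e, mem_filter.2 ⟨he, hfe⟩⟩
  · exact disjoint_filter.2 fun e _ hi hj => hij (σ.injective (Subtype.ext (hi.symm.trans hj)))
  · refine ⟨fun he => ⟨σ.symm ⟨f e, (hfE e he).1⟩, by simp [he]⟩, fun ⟨i, hi⟩ => ?_⟩
    exact (mem_filter.1 hi).1
  · obtain ⟨he, hfe⟩ := mem_filter.1 he
    exact hfe ▸ (hfE e he).2
  · calc _ = ∑ v ∈ S, clusterCost {e ∈ G.edgeFinset | f e = v} edgePoint := by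
          rw [← sum_coe_sort S, ← σ.sum_comp]
          rfl
      _ = _ := by rw [sum_clusterCost_fiberwise_edgePoint hfE hsurj, hcard]

/-- If the minimum vertex cover of a simple graph `G` on `{1,…,n}` with `m` edges has size
`k ≥ 1`, then the edge set can be partitioned into `k` nonempty parts, each a star, such that
the total k-means cost of the corresponding clustering of the points `x_e` (each cluster
connected to its centroid) is exactly `m − k`. -/
theorem exists_star_partition_cost_eq {n : ℕ} (G : SimpleGraph (Fin n))
    [DecidableRel G.Adj] (k : ℕ) (hk : 1 ≤ k)
    (S : Finset (Fin n)) (hS : IsVertexCover G S) (hcard : S.card = k)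
    (hmin : ∀ T : Finset (Fin n), IsVertexCover G T → k ≤ T.card) :
    ∃ P : Fin k → Finset (Sym2 (Fin n)),
      (∀ i, (P i).Nonempty) ∧
      (∀ i j, i ≠ j → Disjoint (P i) (P j)) ∧
      (∀ e, e ∈ G.edgeFinset ↔ ∃ i, e ∈ P i) ∧
      (∀ i, ∃ v : Fin n, ∀ e ∈ P i, v ∈ e) ∧
      ∑ i : Fin k, ∑ e ∈ P i,
          ‖edgePoint e - ((P i).card : ℝ)⁻¹ • ∑ e' ∈ P i, edgePoint e'‖ ^ 2
        = (G.edgeFinset.card : ℝ) - k :=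
  exists_star_partition_cost_eq_general G k S hS hcard hmin
end

section
/- Let E' be a nonempty finite set of edges of a finite simple graph, with m_{E'} = |E'| edges and vertex degrees d_u. Then m_{E'} − 1 ≤ Cost(E') ≤ 2·m_{E'} − 1, where Cost(E') = ∑_u d_u·(1 − d_u/m_{E'}). Equivalently, 2·m_{E'} ≤ ∑_u d_u² ≤ m_{E'}·(m_{E'} + 1). -/
open Finset Sym2

section

variable {V : Type*} [DecidableEq V]

theorem sum_degIn_mul [Fintype V] (F : Finset (Sym2 V)) (g : V → ℕ) :
    ∑ u, degIn F u * g u = ∑ e ∈ F, ∑ u ∈ e.toFinset, g u := by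
  simp_rw [degIn, card_eq_sum_ones, sum_mul, one_mul, sum_filter]
  rw [sum_comm]
  refine sum_congr rfl fun e _ => ?_
  rw [← sum_filter]
  congr 1
  ext u
  simp [mem_toFinset]

theorem sum_degIn_eq_two_mul_card [Fintype V] {F : Finset (Sym2 V)}
    (hF : ∀ e ∈ F, ¬ e.IsDiag) : ∑ u, degIn F u = 2 * #F := by
  have h := sum_degIn_mul F (fun _ => 1)
  simp only [mul_one, sum_const, smul_eq_mul] at h
  rw [h, sum_congr rfl fun e he => card_toFinset_of_not_isDiag e (hF e he), sum_const,
    smul_eq_mul, mul_comm]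

theorem degIn_add_degIn_le (F : Finset (Sym2 V)) {a b : V} (hab : a ≠ b) :
    degIn F a + degIn F b ≤ #F + 1 := by
  have hunion : #(F.filter (a ∈ ·) ∪ F.filter (b ∈ ·)) ≤ #F :=
    card_le_card (union_subset (filter_subset _ _) (filter_subset _ _))
  have hinter : #(F.filter (a ∈ ·) ∩ F.filter (b ∈ ·)) ≤ 1 := by
    refine card_le_one.2 fun x hx y hy => ?_
    simp only [mem_inter, mem_filter] at hx hy
    rw [(mem_and_mem_iff hab).1 ⟨hx.1.2, hx.2.2⟩, (mem_and_mem_iff hab).1 ⟨hy.1.2, hy.2.2⟩]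
  have := card_union_add_card_inter (F.filter (a ∈ ·)) (F.filter (b ∈ ·))
  unfold degIn
  omega

theorem sum_degIn_sq_le [Fintype V] {F : Finset (Sym2 V)} (hF : ∀ e ∈ F, ¬ e.IsDiag) :
    ∑ u, degIn F u ^ 2 ≤ #F * (#F + 1) := by
  simp_rw [sq]
  rw [sum_degIn_mul, ← smul_eq_mul, ← sum_const]
  refine sum_le_sum fun e he => ?_
  induction e with
  | h a b =>
    have hab : a ≠ b := fun h => hF _ he (mk_isDiag_iff.2 h)
    rw [toFinset_mk_eq, sum_pair hab]
    exact degIn_add_degIn_le F hab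

theorem two_mul_card_le_sum_degIn_sq [Fintype V] {F : Finset (Sym2 V)}
    (hF : ∀ e ∈ F, ¬ e.IsDiag) : 2 * #F ≤ ∑ u, degIn F u ^ 2 :=
  sum_degIn_eq_two_mul_card hF ▸ sum_le_sum fun _ _ => Nat.le_self_pow two_ne_zero _

end

theorem Finset.sum_mul_one_sub_div {ι : Type*} (s : Finset ι) (d : ι → ℝ) (m : ℝ) :
    ∑ i ∈ s, d i * (1 - d i / m) = ∑ i ∈ s, d i - (∑ i ∈ s, d i ^ 2) / m := by
  rw [sum_div, ← sum_sub_distrib]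
  exact sum_congr rfl fun i _ => by ring

/-- For a nonempty finite set `E'` of edges of a finite simple graph with `m = |E'|` edges and
degrees `d_u`, we have `m − 1 ≤ Cost(E') ≤ 2m − 1` where
`Cost(E') = ∑_u d_u·(1 − d_u/m)`; equivalently, `2m ≤ ∑_u d_u² ≤ m(m+1)`. -/
theorem cost_bounds {V : Type*} [Fintype V] [DecidableEq V]
    (E' : Finset (Sym2 V)) (hE' : E'.Nonempty) (hsimple : ∀ e ∈ E', ¬ e.IsDiag) :
    ((E'.card : ℝ) - 1 ≤
        ∑ u : V, (degIn E' u : ℝ) * (1 - (degIn E' u : ℝ) / (E'.card : ℝ)) ∧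
      ∑ u : V, (degIn E' u : ℝ) * (1 - (degIn E' u : ℝ) / (E'.card : ℝ)) ≤
        2 * (E'.card : ℝ) - 1) ∧
    (2 * E'.card ≤ ∑ u : V, (degIn E' u) ^ 2 ∧
      ∑ u : V, (degIn E' u) ^ 2 ≤ E'.card * (E'.card + 1)) := by
  have hlower := two_mul_card_le_sum_degIn_sq hsimple
  have hupper := sum_degIn_sq_le hsimple
  refine ⟨?_, hlower, hupper⟩
  have hm : (0 : ℝ) < #E' := by exact_mod_cast hE'.card_pos
  have hsum : ∑ u, (degIn E' u : ℝ) = 2 * #E' := by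
    exact_mod_cast sum_degIn_eq_two_mul_card hsimple
  have hlowerR : 2 * (#E' : ℝ) ≤ ∑ u, (degIn E' u : ℝ) ^ 2 := by exact_mod_cast hlower
  have hupperR : ∑ u, (degIn E' u : ℝ) ^ 2 ≤ #E' * (#E' + 1) := by exact_mod_cast hupper
  rw [sum_mul_one_sub_div, hsum]
  constructor
  · have := (div_le_iff₀ hm).2 (hupperR.trans_eq (mul_comm _ _))
    linarith
  · have := (le_div_iff₀ hm).2 (by linarith : 1 * (#E' : ℝ) ≤ ∑ u, (degIn E' u : ℝ) ^ 2)
    linarith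
end

section
/- Let G = (V,E) be a finite simple triangle-free graph with m edges, let δ ≥ 0, and suppose the edge set E is partitioned into k ≥ 1 nonempty parts F_1, ..., F_k such that ∑_{i=1}^k Cost(F_i) ≤ m − (1 − δ)·k. Then G has a vertex cover of size at most (1 + 3δ)·k. -/
/-!
For one part `F` with `m` edges and degrees `d`, `Cost(F) = 2m - ∑ d² / m`. In the triangle-free
graph formed by `F`, take a vertex `x` of maximum degree `Δ`: `x` together with one endpoint of each
of the `t = m - Δ` edges missing `x` covers `F`. Write `∑ d² = ∑_{uv ∈ F} (d u + d v)`. The edges at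
`x` contribute at most `Δ² + m`, as the neighbourhood of `x` is independent, and every other edge
`uv` has `d u + d v + Δ ≤ m + 2`, as `uvx` is not a triangle. With `∑ d² ≤ 2mΔ` this yields a cover
of `F` of size at most `3 Cost(F) - 3m + 4`, and these bounds add up over the `k` parts.
-/

open Finset

theorem Sym2.sum_filter_mem_mk {V M : Type*} [Fintype V] [DecidableEq V] [AddCommMonoid M]
    {a b : V} (hab : a ≠ b) (f : V → M) : ∑ v with v ∈ s(a, b), f v = f a + f b := by
  rw [show ({v | v ∈ s(a, b)} : Finset V) = {a, b} by ext; simp, sum_pair hab]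

/-- `h₁` alone suffices when `6 (Δ - 1) ≥ m`, and `h₂` otherwise. -/
theorem vertexCover_bound_arith {m Δ t s D : ℕ} (hm : t + Δ = m) (hs : s ≤ t + 1)
    (h₁ : D + t * Δ ≤ Δ ^ 2 + m + t * (m + 2)) (h₂ : D ≤ 2 * m * Δ) :
    s * m + 3 * D ≤ m + 3 * m * (m + 1) := by
  subst hm
  have hsm : s * (t + Δ) ≤ (t + 1) * (t + Δ) := Nat.mul_le_mul_right _ hs
  rcases le_or_gt (t + Δ + 6) (6 * Δ) with h | h <;> nlinarith

namespace SimpleGraph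

variable {V : Type*} [Fintype V] {H : SimpleGraph V} [DecidableRel H.Adj]

theorem sum_degree_sq_le_maxDegree : ∑ v, H.degree v ^ 2 ≤ 2 * #H.edgeFinset * H.maxDegree := by
  rw [← sum_degrees_eq_twice_card_edges, sum_mul]
  exact sum_le_sum fun v _ => by rw [sq]; exact Nat.mul_le_mul_left _ (H.degree_le_maxDegree v)

variable [DecidableEq V]

theorem card_incidenceFinset_inter_le_one {a b : V} (h : a ≠ b) :
    #(H.incidenceFinset a ∩ H.incidenceFinset b) ≤ 1 :=
  card_le_one.2 fun e he f hf => by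
    simp only [mem_inter, mem_incidenceFinset] at he hf
    rw [H.incidenceSet_inter_incidenceSet_subset h he,
      H.incidenceSet_inter_incidenceSet_subset h hf]

theorem card_incidenceFinset_inter_of_adj {a b : V} (h : H.Adj a b) :
    #(H.incidenceFinset a ∩ H.incidenceFinset b) = 1 := by
  rw [card_eq_one]
  refine ⟨s(a, b), coe_injective ?_⟩
  simp [coe_inter, coe_incidenceFinset, H.incidenceSet_inter_incidenceSet_of_adj h]

theorem disjoint_incidenceFinset_of_not_adj {a b : V} (h : ¬H.Adj a b) (hn : a ≠ b) :
    Disjoint (H.incidenceFinset a) (H.incidenceFinset b) := by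
  rw [← disjoint_coe, coe_incidenceFinset, coe_incidenceFinset, Set.disjoint_iff_inter_eq_empty]
  exact H.incidenceSet_inter_incidenceSet_of_not_adj h hn

theorem sum_degree_le_card_edgeFinset_of_isIndepSet {s : Finset V} (hs : H.IsIndepSet s) :
    ∑ v ∈ s, H.degree v ≤ #H.edgeFinset := by
  rw [← sum_congr rfl fun v _ => H.card_incidenceFinset_eq_degree v, ← card_biUnion]
  · exact card_le_card (biUnion_subset.2 fun v _ => H.incidenceFinset_subset v)
  · exact fun a ha b hb hab => disjoint_incidenceFinset_of_not_adj (hs ha hb hab) hab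

/-- The edges at `a`, `b` and `x` overlap in `ab` and, as `abx` is not a triangle, in at most one
more edge. -/
theorem degree_add_degree_add_degree_le (hH : H.CliqueFree 3) {a b x : V} (hab : H.Adj a b)
    (hxa : x ≠ a) (hxb : x ≠ b) :
    H.degree a + H.degree b + H.degree x ≤ #H.edgeFinset + 2 := by
  have hx : #((H.incidenceFinset a ∪ H.incidenceFinset b) ∩ H.incidenceFinset x) ≤ 1 := by
    rw [union_inter_distrib_right]
    by_cases hxa' : H.Adj x a
    · have hxb' : ¬H.Adj x b := fun hxb' =>
        hH {x, a, b} (is3Clique_triple_iff.2 ⟨hxa', hxb', hab⟩)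
      rw [disjoint_iff_inter_eq_empty.1
        (disjoint_incidenceFinset_of_not_adj (fun h => hxb' h.symm) hxb.symm), union_empty]
      exact card_incidenceFinset_inter_le_one hxa.symm
    · rw [disjoint_iff_inter_eq_empty.1
        (disjoint_incidenceFinset_of_not_adj (fun h => hxa' h.symm) hxa.symm), empty_union]
      exact card_incidenceFinset_inter_le_one hxb.symm
  have hsub := union_subset (union_subset (H.incidenceFinset_subset a)
    (H.incidenceFinset_subset b)) (H.incidenceFinset_subset x)
  have hab1 := card_incidenceFinset_inter_of_adj hab
  have := card_union_add_card_inter (H.incidenceFinset a) (H.incidenceFinset b)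
  have := card_union_add_card_inter (H.incidenceFinset a ∪ H.incidenceFinset b)
    (H.incidenceFinset x)
  have := card_le_card hsub
  simp only [card_incidenceFinset_eq_degree] at *
  omega

theorem sum_degree_smul_eq_sum_edgeFinset {M : Type*} [AddCommMonoid M] (f : V → M) :
    ∑ v, H.degree v • f v = ∑ e ∈ H.edgeFinset, ∑ v with v ∈ e, f v := by
  simp_rw [← card_incidenceFinset_eq_degree, incidenceFinset_eq_filter, ← sum_const]
  exact sum_comm' (by simp [and_comm])

theorem image_neighborFinset_eq_incidenceFinset (x : V) :
    (H.neighborFinset x).image (s(x, ·)) = H.incidenceFinset x := by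
  ext e
  simp only [mem_image, mem_neighborFinset, mem_incidenceFinset]
  refine ⟨fun ⟨w, hw, he⟩ => he ▸ H.mk'_mem_incidenceSet_left_iff.2 hw, fun he => ?_⟩
  induction e using Sym2.ind with
  | _ a b =>
    obtain ⟨hab, rfl | rfl⟩ := H.mk'_mem_incidenceSet_iff.1 he
    · exact ⟨b, hab, rfl⟩
    · exact ⟨a, hab.symm, Sym2.eq_swap⟩

theorem sum_incidenceFinset_sum_degree_le (hH : H.CliqueFree 3) (x : V) :
    ∑ e ∈ H.incidenceFinset x, ∑ v with v ∈ e, H.degree v ≤ H.degree x ^ 2 + #H.edgeFinset := by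
  rw [← image_neighborFinset_eq_incidenceFinset, sum_image fun _ _ _ _ h => Sym2.congr_right.1 h,
    sum_congr rfl fun u hu =>
      Sym2.sum_filter_mem_mk (H.ne_of_adj ((H.mem_neighborFinset x _).1 hu)) _,
    sum_add_distrib, sum_const, card_neighborFinset_eq_degree, smul_eq_mul, sq]
  gcongr
  refine sum_degree_le_card_edgeFinset_of_isIndepSet ?_
  rw [coe_neighborFinset]
  exact isIndepSet_neighborSet_of_triangleFree H hH x

theorem sum_degree_add_degree_le_of_mem_sdiff (hH : H.CliqueFree 3) {x : V} {e : Sym2 V}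
    (he : e ∈ H.edgeFinset \ H.incidenceFinset x) :
    ∑ v with v ∈ e, H.degree v + H.degree x ≤ #H.edgeFinset + 2 := by
  induction e using Sym2.ind with
  | _ a b =>
    rw [mem_sdiff, mem_edgeFinset, mem_edgeSet, mem_incidenceFinset,
      mk'_mem_incidenceSet_iff] at he
    obtain ⟨hab, hx⟩ := he
    rw [Sym2.sum_filter_mem_mk hab.ne]
    exact degree_add_degree_add_degree_le hH hab (by tauto) (by tauto)

theorem isVertexCover_insert_image_out (x : V) :
    H.IsVertexCover ↑(insert x ((H.edgeFinset \ H.incidenceFinset x).image fun e => e.out.1)) := by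
  intro u v huv
  by_cases hxe : s(u, v) ∈ H.incidenceFinset x
  · rcases Sym2.mem_iff.1 ((H.mem_incidenceFinset x _).1 hxe).2 with rfl | rfl
    · exact .inl (mem_insert_self _ _)
    · exact .inr (mem_insert_self _ _)
  · have hw : s(u, v).out.1 ∈
        insert x ((H.edgeFinset \ H.incidenceFinset x).image fun e => e.out.1) :=
      mem_insert_of_mem (mem_image_of_mem _ (mem_sdiff.2 ⟨H.mem_edgeFinset.2 huv, hxe⟩))
    rcases Sym2.mem_iff.1 (Sym2.out_fst_mem s(u, v)) with h | h
    · exact .inl (h ▸ hw)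
    · exact .inr (h ▸ hw)

theorem exists_isVertexCover_card_mul_add_le (hH : H.CliqueFree 3) :
    ∃ S : Finset V, H.IsVertexCover S ∧
      #S * #H.edgeFinset + 3 * ∑ v, H.degree v ^ 2
        ≤ #H.edgeFinset + 3 * #H.edgeFinset * (#H.edgeFinset + 1) := by
  cases isEmpty_or_nonempty V
  · exact ⟨∅, fun u => isEmptyElim u, by simp⟩
  obtain ⟨x, hx⟩ := H.exists_maximal_degree_vertex
  set out := H.edgeFinset \ H.incidenceFinset x
  refine ⟨_, isVertexCover_insert_image_out x, ?_⟩
  have hcard : #out + H.degree x = #H.edgeFinset := by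
    rw [← card_incidenceFinset_eq_degree]
    exact card_sdiff_add_card_eq_card (H.incidenceFinset_subset x)
  have hS : #(insert x (out.image fun e => e.out.1)) ≤ #out + 1 :=
    (card_insert_le _ _).trans (Nat.add_le_add_right card_image_le 1)
  have hsplit : ∑ v, H.degree v ^ 2 = ∑ e ∈ out, ∑ v with v ∈ e, H.degree v
      + ∑ e ∈ H.incidenceFinset x, ∑ v with v ∈ e, H.degree v := by
    simp_rw [sq, ← smul_eq_mul, sum_degree_smul_eq_sum_edgeFinset]
    exact (sum_sdiff (H.incidenceFinset_subset x)).symm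
  have hout : ∑ e ∈ out, ∑ v with v ∈ e, H.degree v + #out * H.degree x
      ≤ #out * (#H.edgeFinset + 2) := by
    rw [← smul_eq_mul, ← sum_const, ← smul_eq_mul, ← sum_const, ← sum_add_distrib]
    exact sum_le_sum fun e he => sum_degree_add_degree_le_of_mem_sdiff hH he
  have hstar := sum_incidenceFinset_sum_degree_le hH x
  have hmax := H.sum_degree_sq_le_maxDegree
  rw [hx] at hmax
  exact vertexCover_bound_arith hcard hS (by omega) hmax

end SimpleGraph

section

variable {V : Type*} [Fintype V] [DecidableEq V]

noncomputable def cost (F : Finset (Sym2 V)) : ℝ :=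
  ∑ u, (degIn F u : ℝ) * (1 - degIn F u / #F)

theorem exists_cover_card_le_cost {G : SimpleGraph V} [DecidableRel G.Adj]
    (hG : G.CliqueFree 3) {F : Finset (Sym2 V)} (hFG : F ⊆ G.edgeFinset) (hF : F.Nonempty) :
    ∃ S : Finset V, (∀ ⦃u v⦄, G.Adj u v → s(u, v) ∈ F → u ∈ S ∨ v ∈ S) ∧
      (#S : ℝ) ≤ 3 * cost F - 3 * #F + 4 := by
  set H := G.deleteEdges ↑(G.edgeFinset \ F)
  have hE : H.edgeFinset = F := by
    rw [SimpleGraph.edgeFinset_deleteEdges, Finset.sdiff_sdiff_eq_self hFG]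
  have hdeg (u : V) : H.degree u = degIn F u := by
    rw [← H.card_incidenceFinset_eq_degree, H.incidenceFinset_eq_filter, hE, degIn]
  obtain ⟨S, hS, hcard⟩ :=
    SimpleGraph.exists_isVertexCover_card_mul_add_le (H := H) (hG.anti (G.deleteEdges_le _))
  simp only [hE, hdeg] at hcard
  refine ⟨S, fun u v huv huvF => hS (by simp [H, huv, huvF]), ?_⟩
  have hsum : ∑ u, (degIn F u : ℝ) = 2 * #F := by
    have := H.sum_degrees_eq_twice_card_edges
    simp only [hE, hdeg] at this
    exact_mod_cast this
  have hcost : cost F * #F = 2 * #F * #F - ∑ u, (degIn F u : ℝ) ^ 2 := by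
    rw [cost, sum_mul, ← hsum, sum_mul, ← sum_sub_distrib]
    exact sum_congr rfl fun u _ => by field_simp
  have hcard' : (#S : ℝ) * #F + 3 * ∑ u, (degIn F u : ℝ) ^ 2 ≤ #F + 3 * #F * (#F + 1) := by
    exact_mod_cast hcard
  have hm : (0 : ℝ) < #F := by exact_mod_cast hF.card_pos
  refine le_of_mul_le_mul_right ?_ hm
  nlinarith

end

theorem vertexCover_of_cheap_partition_general {V : Type*} [Fintype V] [DecidableEq V]
    (G : SimpleGraph V) [DecidableRel G.Adj] (hG : G.CliqueFree 3)
    (δ : ℝ) (k : ℕ)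
    (P : Fin k → Finset (Sym2 V))
    (hne : ∀ i, (P i).Nonempty)
    (hdisj : ∀ i j, i ≠ j → Disjoint (P i) (P j))
    (hcover : ∀ e, e ∈ G.edgeFinset ↔ ∃ i, e ∈ P i)
    (hcost : ∑ i : Fin k, ∑ u : V,
        (degIn (P i) u : ℝ) * (1 - (degIn (P i) u : ℝ) / ((P i).card : ℝ))
      ≤ (G.edgeFinset.card : ℝ) - (1 - δ) * k) :
    ∃ S : Finset V, IsVertexCover G S ∧ (S.card : ℝ) ≤ (1 + 3 * δ) * k := by
  choose S hS hScard using fun i =>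
    exists_cover_card_le_cost hG (fun e he => (hcover e).2 ⟨i, he⟩) (hne i)
  refine ⟨univ.biUnion S, fun u v huv => ?_, ?_⟩
  · obtain ⟨i, hi⟩ := (hcover s(u, v)).1 (G.mem_edgeFinset.2 huv)
    exact (hS i huv hi).imp (fun h => mem_biUnion.2 ⟨i, mem_univ i, h⟩)
      (fun h => mem_biUnion.2 ⟨i, mem_univ i, h⟩)
  have hm : ∑ i, (#(P i) : ℝ) = #G.edgeFinset := by
    rw [← Nat.cast_sum, ← card_biUnion fun i _ j _ hij => hdisj i j hij]
    congr 2
    ext e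
    simp [hcover]
  calc (#(univ.biUnion S) : ℝ) ≤ ∑ i, (#(S i) : ℝ) := by exact_mod_cast card_biUnion_le
    _ ≤ ∑ i, (3 * cost (P i) - 3 * #(P i) + 4) := sum_le_sum fun i _ => hScard i
    _ = 3 * ∑ i, cost (P i) - 3 * #G.edgeFinset + 4 * k := by
      simp only [sum_add_distrib, sum_sub_distrib, ← mul_sum, hm, sum_const, card_univ,
        Fintype.card_fin, nsmul_eq_mul]
      ring
    _ ≤ (1 + 3 * δ) * k := by
      have : ∑ i, cost (P i) ≤ #G.edgeFinset - (1 - δ) * k := hcost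
      linarith

/-- If the edge set of a triangle-free simple graph `G` with `m` edges is partitioned into
`k ≥ 1` nonempty parts `F_1, …, F_k` with `∑_i Cost(F_i) ≤ m − (1 − δ)·k` (for some `δ ≥ 0`),
then `G` has a vertex cover of size at most `(1 + 3δ)·k`. -/
theorem vertexCover_of_cheap_partition {V : Type*} [Fintype V] [DecidableEq V]
    (G : SimpleGraph V) [DecidableRel G.Adj] (hG : G.CliqueFree 3)
    (δ : ℝ) (hδ : 0 ≤ δ) (k : ℕ) (hk : 1 ≤ k)
    (P : Fin k → Finset (Sym2 V))
    (hne : ∀ i, (P i).Nonempty)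
    (hdisj : ∀ i j, i ≠ j → Disjoint (P i) (P j))
    (hcover : ∀ e, e ∈ G.edgeFinset ↔ ∃ i, e ∈ P i)
    (hcost : ∑ i : Fin k, ∑ u : V,
        (degIn (P i) u : ℝ) * (1 - (degIn (P i) u : ℝ) / ((P i).card : ℝ))
      ≤ (G.edgeFinset.card : ℝ) - (1 - δ) * k) :
    ∃ S : Finset V, IsVertexCover G S ∧ (S.card : ℝ) ≤ (1 + 3 * δ) * k :=
  vertexCover_of_cheap_partition_general G hG δ k P hne hdisj hcover hcost
end

section
/- Let F be a nonempty finite set of m edges of a finite simple graph with vertex degrees d_u, and define δ by (1/m)·∑_u d_u² = m + 1 − δ. If δ < 1/2, then δ = 0 (i.e., ∑_u d_u² = m·(m + 1)) and F is either a star (all edges of F share a common vertex) or a triangle (three edges forming a 3-cycle). -/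
/-!
Double counting gives `∑ᵤ d_u² = ∑_{e,f ∈ F} |e ∩ f| = m² + m - D`, where `D` is the number of
ordered pairs of disjoint edges of `F`; hence `D = m δ`. If some `e, f ∈ F` are disjoint, an edge
meeting every edge of `F` joins `e` to `f`, and at most two of these four edges pairwise meet; every
other edge lies in a disjoint pair, so `m ≤ 2 D`, i.e. `δ ≥ 1/2`. Thus `δ < 1/2` forces `D = 0`,
and a family of pairwise intersecting edges is a star or a triangle.
-/

open Finset

section

variable {V : Type*} [DecidableEq V]

theorem Sym2.mem_or_mem_of_not_disjoint {e : Sym2 V} {a b : V}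
    (h : ¬Disjoint e.toFinset s(a, b).toFinset) : a ∈ e ∨ b ∈ e := by
  obtain ⟨u, hue, hu⟩ := not_disjoint_iff.1 h
  rw [Sym2.mem_toFinset] at hue
  rcases Sym2.mem_iff.1 (Sym2.mem_toFinset.1 hu) with rfl | rfl
  · exact Or.inl hue
  · exact Or.inr hue

theorem Sym2.eq_or_eq_of_mem_of_not_disjoint {e : Sym2 V} {a b c : V} (ha : a ∈ e)
    (hab : a ≠ b) (hac : a ≠ c) (h : ¬Disjoint e.toFinset s(b, c).toFinset) :
    e = s(a, b) ∨ e = s(a, c) := by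
  rcases Sym2.mem_or_mem_of_not_disjoint h with hb | hc
  · exact Or.inl ((Sym2.mem_and_mem_iff hab).1 ⟨ha, hb⟩)
  · exact Or.inr ((Sym2.mem_and_mem_iff hac).1 ⟨ha, hc⟩)

theorem Sym2.card_toFinset_inter_add_ite_disjoint {e f : Sym2 V} (he : ¬e.IsDiag) :
    #(e.toFinset ∩ f.toFinset) + (if Disjoint e.toFinset f.toFinset then 1 else 0) =
      1 + if e = f then 1 else 0 := by
  by_cases hef : e = f
  · subst hef
    simp [card_toFinset_of_not_isDiag e he]
  by_cases hd : Disjoint e.toFinset f.toFinset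
  · simp [hef, hd, disjoint_iff_inter_eq_empty.1 hd]
  · have : #(e.toFinset ∩ f.toFinset) = 1 := by
      refine le_antisymm (card_le_one.2 fun x hx y hy => ?_)
        (card_pos.2 (not_disjoint_iff_nonempty_inter.1 hd))
      by_contra hxy
      simp only [mem_inter, mem_toFinset] at hx hy
      exact hef (eq_of_ne_mem hxy hx.1 hy.1 hx.2 hy.2)
    simp [this, hef, hd]

theorem sum_degIn_sq [Fintype V] (F : Finset (Sym2 V)) :
    ∑ u, degIn F u ^ 2 = ∑ p ∈ F ×ˢ F, #(p.1.toFinset ∩ p.2.toFinset) := by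
  convert sum_card_bipartiteAbove_eq_sum_card_bipartiteBelow
    (fun u (p : Sym2 V × Sym2 V) => u ∈ p.1 ∧ u ∈ p.2) (s := univ) (t := F ×ˢ F) using 2
  · rw [bipartiteAbove, degIn, sq, ← card_product, ← filter_product]
  · congr 1; ext; simp [bipartiteBelow]

def disjointPairs (F : Finset (Sym2 V)) : Finset (Sym2 V × Sym2 V) :=
  {p ∈ F ×ˢ F | Disjoint p.1.toFinset p.2.toFinset}

theorem sum_degIn_sq_add_card_disjointPairs [Fintype V] {F : Finset (Sym2 V)}
    (hF : ∀ e ∈ F, ¬e.IsDiag) : ∑ u, degIn F u ^ 2 + #(disjointPairs F) = #F ^ 2 + #F := by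
  rw [sum_degIn_sq, disjointPairs, card_filter, ← sum_add_distrib,
    sum_congr rfl fun p hp =>
      Sym2.card_toFinset_inter_add_ite_disjoint (hF p.1 (mem_product.1 hp).1),
    sum_add_distrib, sum_product]
  simp [sq, ← diag_eq_filter]

theorem card_inter_pair_le_one_of_pairwise_not_disjoint {U : Finset (Sym2 V)} {g h : Sym2 V}
    (hU : ∀ x ∈ U, ∀ y ∈ U, ¬Disjoint x.toFinset y.toFinset)
    (hgh : Disjoint g.toFinset h.toFinset) : #(U ∩ {g, h}) ≤ 1 := by
  refine card_le_one.2 fun x hx y hy => ?_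
  simp only [mem_inter, mem_insert, mem_singleton] at hx hy
  rcases hx with ⟨hxU, rfl | rfl⟩ <;> rcases hy with ⟨hyU, rfl | rfl⟩
  · rfl
  · exact absurd hgh (hU _ hxU _ hyU)
  · exact absurd hgh.symm (hU _ hxU _ hyU)
  · rfl

theorem card_le_two_of_pairwise_not_disjoint {U : Finset (Sym2 V)} {e f : Sym2 V}
    (he : ¬e.IsDiag) (hf : ¬f.IsDiag) (hef : Disjoint e.toFinset f.toFinset)
    (hU : ∀ x ∈ U, ∀ y ∈ U, ¬Disjoint x.toFinset y.toFinset)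
    (hUe : ∀ g ∈ U, ¬Disjoint g.toFinset e.toFinset)
    (hUf : ∀ g ∈ U, ¬Disjoint g.toFinset f.toFinset) : #U ≤ 2 := by
  induction e with | h a b => ?_
  induction f with | h c d => ?_
  simp only [Sym2.mk_isDiag_iff] at he hf
  simp only [Sym2.toFinset_mk_eq, disjoint_insert_left, disjoint_insert_right,
    disjoint_singleton, mem_insert, mem_singleton, not_or] at hef
  -- The four edges joining `e` to `f` split into two pairs of disjoint edges.
  have hsub : U ⊆ U ∩ {s(a, c), s(b, d)} ∪ U ∩ {s(a, d), s(b, c)} := by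
    intro g hg
    obtain ⟨x, hxg, hx⟩ := not_disjoint_iff.1 (hUe g hg)
    obtain ⟨y, hyg, hy⟩ := not_disjoint_iff.1 (hUf g hg)
    simp only [Sym2.mem_toFinset, Sym2.mem_iff] at hxg hyg hx hy
    have hxy : x ≠ y := by rintro rfl; grind
    obtain rfl : g = s(x, y) := (Sym2.mem_and_mem_iff hxy).1 ⟨hxg, hyg⟩
    rcases hx with rfl | rfl <;> rcases hy with rfl | rfl <;> simp [hg, Sym2.eq_swap]
  calc #U ≤ #(U ∩ {s(a, c), s(b, d)}) + #(U ∩ {s(a, d), s(b, c)}) :=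
        (card_le_card hsub).trans (card_union_le _ _)
    _ ≤ 1 + 1 := by
        gcongr <;> refine card_inter_pair_le_one_of_pairwise_not_disjoint hU ?_ <;>
          simp [Sym2.toFinset_mk_eq] <;> tauto

theorem card_le_two_mul_card_disjointPairs {F : Finset (Sym2 V)} (hF : ∀ e ∈ F, ¬e.IsDiag)
    (hD : (disjointPairs F).Nonempty) : #F ≤ 2 * #(disjointPairs F) := by
  obtain ⟨⟨e, f⟩, hp⟩ := hD
  simp only [disjointPairs, mem_filter, mem_product] at hp
  obtain ⟨⟨he, hf⟩, hdisj⟩ := hp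
  set U := {g ∈ F | ∀ h ∈ F, ¬Disjoint g.toFinset h.toFinset}
  have hU : #U ≤ 2 := by
    refine card_le_two_of_pairwise_not_disjoint (hF e he) (hF f hf) hdisj
      (fun x hx y hy => (mem_filter.1 hx).2 y (mem_filter.1 hy).1)
      (fun g hg => (mem_filter.1 hg).2 e he) (fun g hg => (mem_filter.1 hg).2 f hf)
  have hsub : F \ U ⊆ (disjointPairs F).image Prod.fst := by
    intro g hg
    simp only [U, mem_sdiff, mem_filter, not_and, not_forall, not_not] at hg
    obtain ⟨h, hh, hgh⟩ := hg.2 hg.1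
    exact mem_image.2 ⟨(g, h), mem_filter.2 ⟨mem_product.2 ⟨hg.1, hh⟩, hgh⟩, rfl⟩
  have hef : e ≠ f := by
    rintro rfl
    exact Sym2.toFinset_ne_empty e ((disjoint_self_iff_empty _).1 hdisj)
  have hpair : {e, f} ⊆ F \ U := by
    simp only [insert_subset_iff, singleton_subset_iff, mem_sdiff]
    exact ⟨⟨he, fun heU => (mem_filter.1 heU).2 f hf hdisj⟩,
      hf, fun hfU => (mem_filter.1 hfU).2 e he hdisj.symm⟩
  have h2 : 2 ≤ #(F \ U) := card_pair hef ▸ card_le_card hpair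
  have hcard : #(F \ U) ≤ #(disjointPairs F) := (card_le_card hsub).trans card_image_le
  have hsplit : #(F \ U) + #U = #F := card_sdiff_add_card_eq_card (filter_subset _ F)
  omega

theorem eq_triangle_of_pairwise_not_disjoint {F : Finset (Sym2 V)} {a b c : V}
    (hmeet : ∀ g ∈ F, ∀ h ∈ F, ¬Disjoint g.toFinset h.toFinset)
    (hab : a ≠ b) (hbc : b ≠ c) (hac : a ≠ c)
    (h₁ : s(a, b) ∈ F) (h₂ : s(b, c) ∈ F) (h₃ : s(c, a) ∈ F) :
    F = {s(a, b), s(b, c), s(c, a)} := by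
  refine Subset.antisymm (fun h hh => ?_) (by simp [insert_subset_iff, h₁, h₂, h₃])
  simp only [mem_insert, mem_singleton]
  rcases Sym2.mem_or_mem_of_not_disjoint (hmeet h hh _ h₁) with ha | hb
  · rcases Sym2.eq_or_eq_of_mem_of_not_disjoint ha hab hac (hmeet h hh _ h₂) with rfl | rfl
    · exact Or.inl rfl
    · exact Or.inr (Or.inr Sym2.eq_swap)
  · rcases Sym2.eq_or_eq_of_mem_of_not_disjoint hb hbc hab.symm (hmeet h hh _ h₃) with rfl | rfl
    · exact Or.inr (Or.inl rfl)
    · exact Or.inl Sym2.eq_swap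

theorem star_or_triangle_of_pairwise_not_disjoint {F : Finset (Sym2 V)} (hne : F.Nonempty)
    (hF : ∀ e ∈ F, ¬e.IsDiag)
    (hmeet : ∀ g ∈ F, ∀ h ∈ F, ¬Disjoint g.toFinset h.toFinset) :
    (∃ v, ∀ e ∈ F, v ∈ e) ∨
      ∃ u v w : V, u ≠ v ∧ v ≠ w ∧ u ≠ w ∧ F = {s(u, v), s(v, w), s(w, u)} := by
  obtain ⟨e, he⟩ := hne
  induction e with | h a b => ?_
  by_cases hsa : ∀ g ∈ F, a ∈ g
  · exact Or.inl ⟨a, hsa⟩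
  by_cases hsb : ∀ g ∈ F, b ∈ g
  · exact Or.inl ⟨b, hsb⟩
  push Not at hsa hsb
  obtain ⟨f, hf, haf⟩ := hsa
  obtain ⟨g, hg, hbg⟩ := hsb
  have hab : a ≠ b := by simpa using hF _ he
  obtain ⟨c, rfl⟩ := Sym2.mem_iff_exists.1
    ((Sym2.mem_or_mem_of_not_disjoint (hmeet f hf _ he)).resolve_left haf)
  obtain ⟨d, rfl⟩ := Sym2.mem_iff_exists.1
    ((Sym2.mem_or_mem_of_not_disjoint (hmeet g hg _ he)).resolve_right hbg)
  have hbc : b ≠ c := by simpa using hF _ hf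
  have hac : a ≠ c := by rintro rfl; exact haf (Sym2.mem_mk_right b a)
  obtain rfl : c = d := by
    rcases Sym2.mem_or_mem_of_not_disjoint (hmeet _ hf _ hg) with ha | hd
    · exact absurd ha haf
    · rcases Sym2.mem_iff.1 hd with rfl | rfl
      · exact absurd (Sym2.mem_mk_right a d) hbg
      · rfl
  rw [Sym2.eq_swap] at hg
  exact Or.inr ⟨a, b, c, hab, hbc, hac,
    eq_triangle_of_pairwise_not_disjoint hmeet hab hbc hac he hf hg⟩

end

/-- Let `F` be a nonempty finite set of `m` edges of a finite simple graph with degrees `d_u`,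
and define `δ` by `(1/m)·∑_u d_u² = m + 1 − δ`.  If `δ < 1/2` then `δ = 0` and `F` is either a
star (all edges share a common vertex) or a triangle. -/
theorem star_or_triangle_of_small_delta {V : Type*} [Fintype V] [DecidableEq V]
    (F : Finset (Sym2 V)) (hF : F.Nonempty) (hsimple : ∀ e ∈ F, ¬ e.IsDiag)
    (δ : ℝ)
    (hδ : (F.card : ℝ)⁻¹ * ∑ u : V, (degIn F u : ℝ) ^ 2 = (F.card : ℝ) + 1 - δ)
    (hlt : δ < 1 / 2) :
    δ = 0 ∧
      ((∃ v : V, ∀ e ∈ F, v ∈ e) ∨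
        (∃ u v w : V, u ≠ v ∧ v ≠ w ∧ u ≠ w ∧
          F = {s(u, v), s(v, w), s(w, u)})) := by
  have hm : (0 : ℝ) < #F := by exact_mod_cast hF.card_pos
  have hD : (#(disjointPairs F) : ℝ) = #F * δ := by
    have hkey : ∑ u, (degIn F u : ℝ) ^ 2 + #(disjointPairs F) = #F ^ 2 + #F := by
      exact_mod_cast sum_degIn_sq_add_card_disjointPairs hsimple
    rw [inv_mul_eq_iff_eq_mul₀ hm.ne'] at hδ
    linear_combination hkey - hδ
  have hD0 : disjointPairs F = ∅ := by
    by_contra hne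
    have hle : (#F : ℝ) ≤ 2 * #(disjointPairs F) := by
      exact_mod_cast card_le_two_mul_card_disjointPairs hsimple (nonempty_iff_ne_empty.2 hne)
    linarith [mul_lt_mul_of_pos_left hlt hm]
  have hδ0 : δ = 0 := by simpa [hD0, hm.ne'] using hD.symm
  refine ⟨hδ0, star_or_triangle_of_pairwise_not_disjoint hF hsimple fun g hg h hh => ?_⟩
  exact filter_eq_empty_iff.1 hD0 (x := (g, h)) (mem_product.2 ⟨hg, hh⟩)
end

section
/- Let H be a finite simple d-regular graph (d ≥ 1) on an N-element vertex set with adjacency matrix A_H satisfying the spectral radius bound: |pᵀ A_H p| ≤ ρ·‖p‖² for every vector p ∈ ℝ^N orthogonal to the all-ones vector. Let G be a finite simple graph with maximum degree at most Δ. Then N · IS(G) ≥ (1 − ρΔ/(2d)) · IS(G ⊗ H). -/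
open Finset Matrix

/-- The tensor (Kronecker) product of two simple graphs. -/
def tensorProd {V U : Type*} (G : SimpleGraph V) (H : SimpleGraph U) :
    SimpleGraph (V × U) where
  Adj a b := G.Adj a.1 b.1 ∧ H.Adj a.2 b.2
  symm := ⟨fun _ _ h => ⟨h.1.symm, h.2.symm⟩⟩
  loopless := ⟨fun a h => G.loopless.irrefl a.1 h.1⟩

/-- `I` is an independent set of `G`: no two of its vertices are adjacent. -/
def IsIndepSet {V : Type*} (G : SimpleGraph V) (I : Finset V) : Prop :=
  ∀ u ∈ I, ∀ v ∈ I, ¬ G.Adj u v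

/-- `IS(G)`: the maximum size of an independent set of `G`. -/
noncomputable def indepNum (V : Type*) [Fintype V] (G : SimpleGraph V) : ℕ :=
  sSup {k | ∃ I : Finset V, IsIndepSet G I ∧ I.card = k}

/-!
Let `I` be an independent set of `G ⊗ H` and `c v = |I_v| / N` the density of its fiber
`I_v = {u | (v, u) ∈ I}`. For `v ~ w` in `G` there are no `H`-edges between `I_v` and `I_w`, so
the expander mixing lemma (the spectral bound on mean-zero vectors, polarised) gives
`c v * c w ≤ ρ (c v + c w) / (2d)`. On the other side, `∑ c v - ∑_{vw ∈ E(G)} c v * c w` is at most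
`IS(G)` on `[0,1]^V`: it is affine in each coordinate, hence maximised at a vertex `1_S` of the
cube, and `|S| - e(S) ≤ IS(G)` by deleting an endpoint of each edge inside `S`. Summing the fiber
bound over the at most `Δ` edges at each vertex gives `(1 - ρΔ/(2d)) ∑ c v ≤ IS(G)`, and
`|I| = N ∑ c v`.
-/

section IndepNum

variable {V : Type*} [Fintype V] (G : SimpleGraph V)

lemma bddAbove_indepSet_cards : BddAbove {k | ∃ I : Finset V, IsIndepSet G I ∧ I.card = k} :=
  ⟨Fintype.card V, by rintro _ ⟨I, -, rfl⟩; exact I.card_le_univ⟩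

lemma IsIndepSet.card_le_indepNum {G : SimpleGraph V} {I : Finset V} (h : IsIndepSet G I) :
    I.card ≤ indepNum V G :=
  le_csSup (bddAbove_indepSet_cards G) ⟨I, h, rfl⟩

lemma exists_isIndepSet_card_eq_indepNum :
    ∃ I : Finset V, IsIndepSet G I ∧ I.card = indepNum V G :=
  Nat.sSup_mem (s := {k | ∃ I : Finset V, IsIndepSet G I ∧ I.card = k})
    ⟨0, ∅, by simp [IsIndepSet]⟩ (bddAbove_indepSet_cards G)

lemma indepNum_le_card : indepNum V G ≤ Fintype.card V := by
  obtain ⟨I, -, hI⟩ := exists_isIndepSet_card_eq_indepNum G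
  exact hI ▸ I.card_le_univ

end IndepNum

namespace SimpleGraph

variable {V : Type*} [Fintype V] (G : SimpleGraph V) [DecidableRel G.Adj]

lemma sum_sum_ite_adj_left (f : V → ℝ) :
    ∑ v, ∑ w, (if G.Adj v w then f v else 0) = ∑ v, G.degree v * f v := by
  refine Finset.sum_congr rfl fun v _ => ?_
  rw [← Finset.sum_filter, Finset.sum_const, nsmul_eq_mul, ← G.card_neighborFinset_eq_degree,
    G.neighborFinset_eq_filter]

lemma sum_sum_ite_adj_right (f : V → ℝ) :
    ∑ v, ∑ w, (if G.Adj v w then f w else 0) = ∑ v, G.degree v * f v := by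
  rw [Finset.sum_comm, ← sum_sum_ite_adj_left]
  simp_rw [G.adj_comm]

end SimpleGraph

section CardSubEdges

variable {V : Type*} [Fintype V] [DecidableEq V] (G : SimpleGraph V) [DecidableRel G.Adj]

/-- The multilinear extension of `S ↦ |S| - e(S)`; the quadratic form counts every edge twice. -/
noncomputable def cardSubEdges (c : V → ℝ) : ℝ :=
  ∑ v, c v - c ⬝ᵥ (G.adjMatrix ℝ *ᵥ c) / 2

lemma cardSubEdges_add_single (c : V → ℝ) (a : V) (t : ℝ) :
    cardSubEdges G (c + Pi.single a t) =
      cardSubEdges G c + t * (1 - (G.adjMatrix ℝ *ᵥ c) a) := by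
  have hcross : c ⬝ᵥ (G.adjMatrix ℝ *ᵥ Pi.single a t) = t * (G.adjMatrix ℝ *ᵥ c) a := by
    rw [dotProduct_mulVec, dotProduct_single, SimpleGraph.adjMatrix_vecMul_apply,
      SimpleGraph.adjMatrix_mulVec_apply, mul_comm]
  have hdiag : Pi.single a t ⬝ᵥ (G.adjMatrix ℝ *ᵥ Pi.single a t) = 0 := by
    simp
  simp only [cardSubEdges, mulVec_add, add_dotProduct, dotProduct_add, hcross, hdiag,
    single_dotProduct, Finset.sum_add_distrib, Pi.add_apply, Finset.sum_pi_single',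
    Finset.mem_univ, if_true]
  ring

lemma cardSubEdges_indicator_le_indepNum (S : Finset V) :
    cardSubEdges G (fun v => if v ∈ S then 1 else 0) ≤ indepNum V G := by
  induction S using Finset.strongInduction with
  | H S ih =>
    by_cases hS : IsIndepSet G S
    · have hquad : (fun v => if v ∈ S then (1 : ℝ) else 0) ⬝ᵥ
          (G.adjMatrix ℝ *ᵥ fun v => if v ∈ S then 1 else 0) = 0 := by
        refine Finset.sum_eq_zero fun u _ => ?_
        by_cases hu : u ∈ S
        · rw [SimpleGraph.adjMatrix_mulVec_apply, Finset.sum_eq_zero fun w hw =>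
            if_neg fun hw' => hS u hu w hw' ((G.mem_neighborFinset u w).1 hw), mul_zero]
        · simp [hu]
      rw [cardSubEdges, hquad, Finset.sum_boole, Finset.filter_mem_eq_inter, Finset.univ_inter]
      simpa using hS.card_le_indepNum
    · obtain ⟨u, hu, v, hv, huv⟩ : ∃ u ∈ S, ∃ v ∈ S, G.Adj u v := by
        simpa [IsIndepSet] using hS
      have hsplit : (fun w => if w ∈ S then (1 : ℝ) else 0) =
          (fun w => if w ∈ S.erase u then 1 else 0) + Pi.single u 1 := by
        ext w
        by_cases hw : w = u <;> simp [hw, hu]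
      have hdeg : 1 ≤ (G.adjMatrix ℝ *ᵥ fun w => if w ∈ S.erase u then 1 else 0) u := by
        rw [SimpleGraph.adjMatrix_mulVec_apply]
        calc (1 : ℝ) = if v ∈ S.erase u then 1 else 0 := by simp [hv, (G.ne_of_adj huv).symm]
          _ ≤ _ := Finset.single_le_sum (f := fun w => if w ∈ S.erase u then (1 : ℝ) else 0)
            (fun _ _ => by positivity) ((G.mem_neighborFinset u v).2 huv)
      rw [hsplit, cardSubEdges_add_single]
      linarith [ih _ (Finset.erase_ssubset hu)]

lemma cardSubEdges_update_le_max (c : V → ℝ) (a : V) {s : ℝ} (h0 : 0 ≤ s) (h1 : s ≤ 1) :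
    cardSubEdges G (Function.update c a s) ≤
      max (cardSubEdges G (Function.update c a 0)) (cardSubEdges G (Function.update c a 1)) := by
  have hupdate : ∀ t, Function.update c a t = Function.update c a 0 + Pi.single a t := by
    intro t; ext v; by_cases hv : v = a <;> simp [hv]
  rw [hupdate s, hupdate 1, cardSubEdges_add_single, cardSubEdges_add_single]
  rcases le_total 0 (1 - (G.adjMatrix ℝ *ᵥ Function.update c a 0) a) with hg | hg
  · exact le_max_of_le_right (by nlinarith)
  · exact le_max_of_le_left (by nlinarith)

lemma cardSubEdges_le_indepNum (c : V → ℝ) (h0 : ∀ v, 0 ≤ c v) (h1 : ∀ v, c v ≤ 1) :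
    cardSubEdges G c ≤ indepNum V G := by
  suffices ∀ T : Finset V, ∀ c : V → ℝ, (∀ v, 0 ≤ c v) → (∀ v, c v ≤ 1) →
      (∀ v ∉ T, c v = 0 ∨ c v = 1) → cardSubEdges G c ≤ indepNum V G from
    this univ c h0 h1 (by simp)
  intro T
  induction T using Finset.induction_on with
  | empty =>
    intro c _ _ hc
    have : c = fun v => if v ∈ univ.filter (c · = 1) then 1 else 0 := by
      ext v
      rcases hc v (Finset.notMem_empty v) with h | h <;> simp [h]
    exact this ▸ cardSubEdges_indicator_le_indepNum G _
  | insert a T ha ih =>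
    intro c h0 h1 hc
    have hvertex : ∀ t : ℝ, (t = 0 ∨ t = 1) →
        cardSubEdges G (Function.update c a t) ≤ indepNum V G := by
      intro t ht
      refine ih _ (fun v => ?_) (fun v => ?_) (fun v hv => ?_) <;>
        rw [Function.update_apply] <;> split_ifs with hva
      · rcases ht with rfl | rfl <;> norm_num
      · exact h0 v
      · rcases ht with rfl | rfl <;> norm_num
      · exact h1 v
      · exact ht
      · exact hc v (by simp [hva, hv])
    calc cardSubEdges G c = cardSubEdges G (Function.update c a (c a)) := by
          rw [Function.update_eq_self]
      _ ≤ _ := cardSubEdges_update_le_max G c a (h0 a) (h1 a)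
      _ ≤ indepNum V G := max_le (hvertex 0 (.inl rfl)) (hvertex 1 (.inr rfl))

lemma one_sub_mul_sum_le_indepNum {κ : ℝ} (hκ : 0 ≤ κ) {Δ : ℕ} (hΔ : ∀ v, G.degree v ≤ Δ)
    (c : V → ℝ) (h0 : ∀ v, 0 ≤ c v) (h1 : ∀ v, c v ≤ 1)
    (hpair : ∀ v w, G.Adj v w → c v * c w ≤ κ * (c v + c w)) :
    (1 - κ * Δ) * ∑ v, c v ≤ indepNum V G := by
  have hdeg : ∑ v, G.degree v * c v ≤ Δ * ∑ v, c v := by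
    rw [Finset.mul_sum]
    exact Finset.sum_le_sum fun v _ => mul_le_mul_of_nonneg_right (mod_cast hΔ v) (h0 v)
  have hquad : c ⬝ᵥ (G.adjMatrix ℝ *ᵥ c) ≤ 2 * κ * Δ * ∑ v, c v := by
    calc c ⬝ᵥ (G.adjMatrix ℝ *ᵥ c) = ∑ v, ∑ w, (if G.Adj v w then c v * c w else 0) :=
          G.dotProduct_mulVec_adjMatrix c c
      _ ≤ ∑ v, ∑ w, ((if G.Adj v w then κ * c v else 0) +
            (if G.Adj v w then κ * c w else 0)) := by
          gcongr with v _ w _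
          split_ifs with h
          · linarith [hpair v w h]
          · simp
      _ = 2 * κ * ∑ v, G.degree v * c v := by
          simp only [Finset.sum_add_distrib]
          rw [G.sum_sum_ite_adj_left (fun v => κ * c v),
            G.sum_sum_ite_adj_right (fun v => κ * c v), Finset.mul_sum, ← Finset.sum_add_distrib]
          exact Finset.sum_congr rfl fun v _ => by ring
      _ ≤ 2 * κ * Δ * ∑ v, c v := by rw [mul_assoc _ (Δ : ℝ)]; gcongr
  have := cardSubEdges_le_indepNum G c h0 h1
  rw [cardSubEdges] at this
  linarith

end CardSubEdges

section Spectral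

variable {U : Type*} [Fintype U]

lemma Matrix.IsSymm.dotProduct_mulVec_comm {A : Matrix U U ℝ} (hA : A.IsSymm) (p q : U → ℝ) :
    q ⬝ᵥ (A *ᵥ p) = p ⬝ᵥ (A *ᵥ q) := by
  rw [dotProduct_mulVec, ← mulVec_transpose, hA.eq, dotProduct_comm]

lemma two_mul_abs_dotProduct_mulVec_le {A : Matrix U U ℝ} (hA : A.IsSymm) {ρ : ℝ}
    (hspec : ∀ p : U → ℝ, ∑ i, p i = 0 → |p ⬝ᵥ (A *ᵥ p)| ≤ ρ * ∑ i, p i ^ 2)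
    {p q : U → ℝ} (hp : ∑ i, p i = 0) (hq : ∑ i, q i = 0) :
    2 * |p ⬝ᵥ (A *ᵥ q)| ≤ ρ * (∑ i, p i ^ 2 + ∑ i, q i ^ 2) := by
  have hadd := hspec (p + q) (by simp [Finset.sum_add_distrib, hp, hq])
  have hsub := hspec (p - q) (by simp [Finset.sum_sub_distrib, hp, hq])
  have hsq : ∑ i, (p + q) i ^ 2 + ∑ i, (p - q) i ^ 2 = 2 * (∑ i, p i ^ 2 + ∑ i, q i ^ 2) := by
    simp only [Pi.add_apply, Pi.sub_apply, Finset.mul_sum, ← Finset.sum_add_distrib]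
    exact Finset.sum_congr rfl fun i _ => by ring
  simp only [mulVec_add, mulVec_sub, add_dotProduct, dotProduct_add, sub_dotProduct,
    dotProduct_sub, hA.dotProduct_mulVec_comm p q] at hadd hsub
  rw [abs_le] at hadd hsub
  have hρsq := congrArg (ρ * ·) hsq
  simp only [mul_add] at hρsq
  rcases abs_cases (p ⬝ᵥ (A *ᵥ q)) with ⟨h, -⟩ | ⟨h, -⟩ <;> rw [h] <;> linarith

lemma sum_sub_mean [Nonempty U] (x : U → ℝ) :
    ∑ i, (x i - (∑ j, x j) / Fintype.card U) = 0 := by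
  rw [Finset.sum_sub_distrib, Finset.sum_const, Finset.card_univ, nsmul_eq_mul,
    mul_div_cancel₀ _ (by positivity), sub_self]

lemma sum_sub_mean_sq [Nonempty U] (x : U → ℝ) :
    ∑ i, (x i - (∑ j, x j) / Fintype.card U) ^ 2 =
      ∑ i, x i ^ 2 - (∑ i, x i) ^ 2 / Fintype.card U := by
  have hN : (Fintype.card U : ℝ) ≠ 0 := by positivity
  simp only [sub_sq, Finset.sum_add_distrib, Finset.sum_sub_distrib, ← Finset.sum_mul,
    ← Finset.mul_sum, Finset.sum_const, Finset.card_univ, nsmul_eq_mul]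
  field_simp
  ring

lemma dotProduct_adjMatrix_mulVec_eq_of_isRegularOfDegree [Nonempty U] {H : SimpleGraph U}
    [DecidableRel H.Adj] {d : ℕ} (hreg : H.IsRegularOfDegree d) (x y : U → ℝ) :
    x ⬝ᵥ (H.adjMatrix ℝ *ᵥ y) =
      (fun i => x i - (∑ j, x j) / Fintype.card U) ⬝ᵥ
          (H.adjMatrix ℝ *ᵥ fun i => y i - (∑ j, y j) / Fintype.card U) +
        d * (∑ i, x i) * (∑ i, y i) / Fintype.card U := by
  set N : ℝ := (Fintype.card U : ℝ)
  set a := (∑ i, x i) / N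
  set b := (∑ i, y i) / N
  have hconst : ∀ t : ℝ, H.adjMatrix ℝ *ᵥ (fun _ => t) = fun _ => d * t :=
    fun t => funext fun _ => SimpleGraph.adjMatrix_mulVec_const_apply_of_regular hreg
  have hsplit : ∀ (z : U → ℝ) (m : ℝ), z = (fun i => z i - m) + fun _ => m :=
    fun z m => funext fun i => by simp
  have hx : (fun i => x i - a) ⬝ᵥ (fun _ => (d : ℝ) * b) = 0 := by
    rw [dotProduct, ← Finset.sum_mul]
    exact mul_eq_zero_of_left (sum_sub_mean x) _
  have hy : (fun i => y i - b) ⬝ᵥ (fun _ => (d : ℝ) * a) = 0 := by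
    rw [dotProduct, ← Finset.sum_mul]
    exact mul_eq_zero_of_left (sum_sub_mean y) _
  have hab : (fun _ : U => a) ⬝ᵥ (fun _ => (d : ℝ) * b) = d * (∑ i, x i) * (∑ i, y i) / N := by
    simp only [dotProduct, Finset.sum_const, Finset.card_univ, nsmul_eq_mul, a, b, N]
    field_simp
  conv_lhs => rw [hsplit x a, hsplit y b]
  rw [mulVec_add, dotProduct_add, add_dotProduct, add_dotProduct,
    H.isSymm_adjMatrix.dotProduct_mulVec_comm (fun i => y i - b) (fun _ => a), hconst, hconst,
    hx, hy, hab]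
  ring

lemma two_mul_abs_dotProduct_adjMatrix_mulVec_sub_le [Nonempty U] {H : SimpleGraph U}
    [DecidableRel H.Adj] {d : ℕ} (hreg : H.IsRegularOfDegree d) {ρ : ℝ}
    (hspec : ∀ p : U → ℝ, ∑ i, p i = 0 → |p ⬝ᵥ (H.adjMatrix ℝ *ᵥ p)| ≤ ρ * ∑ i, p i ^ 2)
    (x y : U → ℝ) :
    2 * |x ⬝ᵥ (H.adjMatrix ℝ *ᵥ y) - d * (∑ i, x i) * (∑ i, y i) / Fintype.card U| ≤
      ρ * (∑ i, x i ^ 2 - (∑ i, x i) ^ 2 / Fintype.card U +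
        (∑ i, y i ^ 2 - (∑ i, y i) ^ 2 / Fintype.card U)) := by
  rw [dotProduct_adjMatrix_mulVec_eq_of_isRegularOfDegree hreg, add_sub_cancel_right,
    ← sum_sub_mean_sq x, ← sum_sub_mean_sq y]
  exact two_mul_abs_dotProduct_mulVec_le H.isSymm_adjMatrix hspec (sum_sub_mean x) (sum_sub_mean y)

variable [DecidableEq U]

lemma nonneg_of_abs_dotProduct_mulVec_le {A : Matrix U U ℝ} {ρ : ℝ}
    (hspec : ∀ p : U → ℝ, ∑ i, p i = 0 → |p ⬝ᵥ (A *ᵥ p)| ≤ ρ * ∑ i, p i ^ 2)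
    {u w : U} (huw : u ≠ w) : 0 ≤ ρ := by
  set p : U → ℝ := Pi.single u 1 - Pi.single w 1
  have hsq : ∑ i, p i ^ 2 = 2 := by
    norm_num [p, sub_sq, Finset.sum_add_distrib, Finset.sum_sub_distrib, Pi.single_apply, huw.symm]
  have h := hspec p (by simp [p, Finset.sum_sub_distrib])
  rw [hsq] at h
  linarith [abs_nonneg (p ⬝ᵥ (A *ᵥ p))]

lemma two_mul_card_mul_card_le_of_forall_not_adj [Nonempty U] {H : SimpleGraph U}
    [DecidableRel H.Adj] {d : ℕ} (hreg : H.IsRegularOfDegree d) {ρ : ℝ}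
    (hspec : ∀ p : U → ℝ, ∑ i, p i = 0 → |p ⬝ᵥ (H.adjMatrix ℝ *ᵥ p)| ≤ ρ * ∑ i, p i ^ 2)
    {S T : Finset U} (hST : ∀ u ∈ S, ∀ w ∈ T, ¬ H.Adj u w) :
    2 * d * #S * #T ≤
      ρ * (#S * (Fintype.card U - #S) + #T * (Fintype.card U - #T) : ℝ) := by
  set N : ℝ := (Fintype.card U : ℝ)
  have hsum : ∀ R : Finset U, ∑ u, (if u ∈ R then (1 : ℝ) else 0) = #R := by simp
  have hsq : ∀ R : Finset U, ∑ u, (if u ∈ R then (1 : ℝ) else 0) ^ 2 = #R := by simp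
  have hzero : (fun u => if u ∈ S then (1 : ℝ) else 0) ⬝ᵥ
      (H.adjMatrix ℝ *ᵥ fun u => if u ∈ T then 1 else 0) = 0 := by
    refine Finset.sum_eq_zero fun u _ => ?_
    by_cases hu : u ∈ S
    · rw [SimpleGraph.adjMatrix_mulVec_apply, Finset.sum_eq_zero fun w hw =>
        if_neg fun hwT => hST u hu w hwT ((H.mem_neighborFinset u w).1 hw), mul_zero]
    · simp [hu]
  have h := two_mul_abs_dotProduct_adjMatrix_mulVec_sub_le hreg hspec
    (fun u => if u ∈ S then 1 else 0) (fun u => if u ∈ T then 1 else 0)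
  rw [hzero, hsum, hsum, hsq, hsq, zero_sub, abs_neg, abs_of_nonneg (by positivity)] at h
  have hN : 0 < N := by positivity
  calc 2 * d * #S * #T = N * (2 * (d * #S * #T / N)) := by field_simp
    _ ≤ N * (ρ * (#S - #S ^ 2 / N + (#T - #T ^ 2 / N))) := by gcongr
    _ = _ := by field_simp

end Spectral

section Fibers

variable {V U : Type*} [Fintype U] [DecidableEq V] [DecidableEq U]

noncomputable def fiberDensity (I : Finset (V × U)) (v : V) : ℝ :=
  #{u | (v, u) ∈ I} / Fintype.card U

lemma fiberDensity_nonneg (I : Finset (V × U)) (v : V) : 0 ≤ fiberDensity I v := by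
  unfold fiberDensity
  positivity

lemma fiberDensity_le_one (I : Finset (V × U)) (v : V) : fiberDensity I v ≤ 1 :=
  div_le_one_of_le₀ (Nat.cast_le.2 (Finset.card_le_univ _)) (Nat.cast_nonneg _)

lemma card_eq_mul_sum_fiberDensity [Fintype V] [Nonempty U] (I : Finset (V × U)) :
    (#I : ℝ) = Fintype.card U * ∑ v, fiberDensity I v := by
  have hfibers : #I = ∑ v, #{u | (v, u) ∈ I} := by
    simp only [Finset.card_filter]
    rw [← Fintype.sum_prod_type (f := fun x => if x ∈ I then 1 else 0), ← Finset.card_filter,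
      Finset.filter_mem_eq_inter, Finset.univ_inter]
  rw [hfibers, Nat.cast_sum, Finset.mul_sum]
  exact Finset.sum_congr rfl fun v _ => by unfold fiberDensity; field_simp

lemma IsIndepSet.fiberDensity_mul_le [Nonempty U] {G : SimpleGraph V} {H : SimpleGraph U}
    [DecidableRel H.Adj] {I : Finset (V × U)} (hI : IsIndepSet (tensorProd G H) I) {d : ℕ}
    (hd : 1 ≤ d) (hreg : H.IsRegularOfDegree d) {ρ : ℝ} (hρ : 0 ≤ ρ)
    (hspec : ∀ p : U → ℝ, ∑ i, p i = 0 → |p ⬝ᵥ (H.adjMatrix ℝ *ᵥ p)| ≤ ρ * ∑ i, p i ^ 2)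
    {v v' : V} (hvv' : G.Adj v v') :
    fiberDensity I v * fiberDensity I v' ≤
      ρ / (2 * d) * (fiberDensity I v + fiberDensity I v') := by
  have h := two_mul_card_mul_card_le_of_forall_not_adj hreg hspec
    (S := {u | (v, u) ∈ I}) (T := {u | (v', u) ∈ I})
    (by simp only [Finset.mem_filter, Finset.mem_univ, true_and]
        exact fun u hu u' hu' huu' => hI _ hu _ hu' ⟨hvv', huu'⟩)
  set N : ℝ := (Fintype.card U : ℝ)
  set s : ℝ := (#{u | (v, u) ∈ I} : ℝ)
  set t : ℝ := (#{u | (v', u) ∈ I} : ℝ)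
  have hN : 0 < N := by positivity
  have hd' : (0 : ℝ) < d := by exact_mod_cast hd
  have hweak : 2 * d * s * t ≤ ρ * N * (s + t) := by
    nlinarith [mul_nonneg hρ (sq_nonneg s), mul_nonneg hρ (sq_nonneg t)]
  calc fiberDensity I v * fiberDensity I v' = s / N * (t / N) := rfl
    _ = 2 * d * s * t / (2 * d * N ^ 2) := by field_simp
    _ ≤ ρ * N * (s + t) / (2 * d * N ^ 2) := by gcongr
    _ = ρ / (2 * d) * (s / N + t / N) := by field_simp

end Fibers

theorem indepNum_tensorProd_le_general {V U : Type*} [Fintype V] [Fintype U]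
    (G : SimpleGraph V) [DecidableRel G.Adj]
    (H : SimpleGraph U) [DecidableRel H.Adj]
    (d : ℕ) (hd : 1 ≤ d) (hreg : H.IsRegularOfDegree d)
    (ρ : ℝ)
    (hspec : ∀ p : U → ℝ, ∑ i, p i = 0 →
      abs (p ⬝ᵥ (H.adjMatrix ℝ *ᵥ p)) ≤ ρ * ∑ i, (p i) ^ 2)
    (Δ : ℕ) (hΔ : ∀ v, G.degree v ≤ Δ) :
    (1 - ρ * Δ / (2 * d)) * (indepNum (V × U) (tensorProd G H) : ℝ)
      ≤ (Fintype.card U : ℝ) * (indepNum V G : ℝ) := by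
  classical
  rcases isEmpty_or_nonempty U with hU | hU
  · have : indepNum (V × U) (tensorProd G H) = 0 := by
      simpa using indepNum_le_card (tensorProd G H)
    simp [this]
  obtain ⟨w, huw⟩ := (H.degree_pos_iff_exists_adj (Classical.arbitrary U)).1
    (hreg.degree_eq _ ▸ hd)
  have hρ : 0 ≤ ρ := nonneg_of_abs_dotProduct_mulVec_le hspec (H.ne_of_adj huw)
  obtain ⟨I, hI, hIcard⟩ := exists_isIndepSet_card_eq_indepNum (tensorProd G H)
  have hbound := one_sub_mul_sum_le_indepNum G (by positivity) hΔ (fiberDensity I)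
    (fiberDensity_nonneg I) (fiberDensity_le_one I)
    fun v v' hvv' => hI.fiberDensity_mul_le hd hreg hρ hspec hvv'
  calc (1 - ρ * Δ / (2 * d)) * (indepNum (V × U) (tensorProd G H) : ℝ)
      = Fintype.card U * ((1 - ρ / (2 * d) * Δ) * ∑ v, fiberDensity I v) := by
        rw [← hIcard, card_eq_mul_sum_fiberDensity]
        ring
    _ ≤ Fintype.card U * indepNum V G := by gcongr

/-- Let `H` be a `d`-regular graph (`d ≥ 1`) on `N` vertices with spectral radius at most `ρ`
(i.e. `|pᵀ A_H p| ≤ ρ‖p‖²` for all `p` orthogonal to the all-ones vector), and let `G` have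
maximum degree at most `Δ`.  Then `N · IS(G) ≥ (1 − ρΔ/(2d)) · IS(G ⊗ H)`. -/
theorem indepNum_tensorProd_le {V U : Type*} [Fintype V] [Fintype U] [DecidableEq V]
    [DecidableEq U] (G : SimpleGraph V) [DecidableRel G.Adj]
    (H : SimpleGraph U) [DecidableRel H.Adj]
    (d : ℕ) (hd : 1 ≤ d) (hreg : H.IsRegularOfDegree d)
    (ρ : ℝ)
    (hspec : ∀ p : U → ℝ, ∑ i, p i = 0 →
      abs (p ⬝ᵥ (H.adjMatrix ℝ *ᵥ p)) ≤ ρ * ∑ i, (p i) ^ 2)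
    (Δ : ℕ) (hΔ : ∀ v, G.degree v ≤ Δ) :
    (1 - ρ * Δ / (2 * d)) * (indepNum (V × U) (tensorProd G H) : ℝ)
      ≤ (Fintype.card U : ℝ) * (indepNum V G : ℝ) :=
  indepNum_tensorProd_le_general G H d hd hreg ρ hspec Δ hΔ
end

section
/- Let G be a finite simple graph with maximum degree at most Δ and adjacency matrix A, and let H be a finite simple d-regular graph (d ≥ 1) on N vertices with adjacency matrix A_H satisfying |pᵀ A_H p| ≤ ρ·‖p‖² for every p ∈ ℝ^N orthogonal to the all-ones vector. Let B = (1/d)·A_H and let J̃_N be the N×N matrix all of whose entries equal 1/N. Then for every vector f ∈ ℝ^{n×N}: | fᵀ (A ⊗ (B − J̃_N)) f | ≤ (Δρ/d)·‖f‖². -/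
open Matrix Kronecker

/-!
Write `f` as a family of rows `f_v ∈ ℝ^U`, so that `fᵀ (A ⊗ M) f = ∑_{v,w} A_{vw} f_vᵀ M f_w` with
`M = B - J̃_N`. Since `H` is `d`-regular, `M` kills constants on both sides, so each `f_v` may be
replaced by its centering `p_v`; on centered vectors `J̃_N` vanishes and `M` acts as `A_H / d`.
Polarizing the spectral hypothesis gives `|p_vᵀ A_H p_w| ≤ ρ (‖p_v‖² + ‖p_w‖²) / 2`, and summing
against the adjacency matrix of `G` costs a factor `Δ`. Finally `‖p_v‖ ≤ ‖f_v‖`, and `ρ ≥ 0`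
because `H` has an edge.
-/

theorem Matrix.dotProduct_kronecker_mulVec {l m n p R : Type*} [Fintype l] [Fintype m]
    [Fintype n] [Fintype p] [CommSemiring R] (A : Matrix l m R) (B : Matrix n p R)
    (x : l × n → R) (y : m × p → R) :
    x ⬝ᵥ ((A ⊗ₖ B) *ᵥ y) =
      ∑ i, ∑ j, A i j * (Function.curry x i ⬝ᵥ (B *ᵥ Function.curry y j)) := by
  simp only [dotProduct, mulVec, Fintype.sum_prod_type, kroneckerMap_apply, Finset.mul_sum,
    Function.curry_apply]
  rw [Finset.sum_congr rfl fun i _ => Finset.sum_comm]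
  refine Finset.sum_congr rfl fun i _ => Finset.sum_congr rfl fun k _ => ?_
  exact Finset.sum_congr rfl fun j _ => Finset.sum_congr rfl fun r _ => by ring

theorem Matrix.dotProduct_smul_sub_const_mulVec_of_sum_eq_zero {n R : Type*} [Fintype n] [CommRing R]
    (A : Matrix n n R) (c a : R) (p : n → R) {q : n → R} (hq : ∑ i, q i = 0) :
    p ⬝ᵥ ((c • A - of fun _ _ => a) *ᵥ q) = c * (p ⬝ᵥ (A *ᵥ q)) := by
  have hconst : (of fun _ _ : n => a) *ᵥ q = 0 := by
    ext; simp [mulVec, dotProduct, ← Finset.mul_sum, hq]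
  rw [sub_mulVec, hconst, sub_zero, smul_mulVec, dotProduct_smul, smul_eq_mul]

section Centering

variable {n : Type*} [Fintype n]

noncomputable def centered (x : n → ℝ) : n → ℝ := x - ((∑ i, x i) / Fintype.card n) • 1

theorem sum_centered [Nonempty n] (x : n → ℝ) : ∑ i, centered x i = 0 := by
  have hN : (Fintype.card n : ℝ) ≠ 0 := by positivity
  simp only [centered, Pi.sub_apply, Pi.smul_apply, Pi.one_apply, smul_eq_mul, mul_one,
    Finset.sum_sub_distrib, Finset.sum_const, Finset.card_univ, nsmul_eq_mul]
  rw [mul_div_cancel₀ _ hN, sub_self]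

theorem sum_centered_sq (x : n → ℝ) :
    ∑ i, centered x i ^ 2 = ∑ i, x i ^ 2 - (∑ i, x i) ^ 2 / Fintype.card n := by
  rcases isEmpty_or_nonempty n with _ | _
  · simp
  have hN : (Fintype.card n : ℝ) ≠ 0 := by positivity
  simp only [centered, Pi.sub_apply, Pi.smul_apply, Pi.one_apply, smul_eq_mul, mul_one, sub_sq,
    Finset.sum_add_distrib, Finset.sum_sub_distrib, Finset.sum_const, Finset.card_univ,
    nsmul_eq_mul, ← Finset.sum_mul, ← Finset.mul_sum]
  field_simp
  ring

theorem centered_dotProduct_mulVec_centered {M : Matrix n n ℝ} (hrow : M *ᵥ 1 = 0)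
    (hcol : 1 ᵥ* M = 0) (x y : n → ℝ) :
    centered x ⬝ᵥ (M *ᵥ centered y) = x ⬝ᵥ (M *ᵥ y) := by
  rw [centered, centered, mulVec_sub, mulVec_smul, hrow, smul_zero, sub_zero, sub_dotProduct,
    smul_dotProduct, dotProduct_mulVec 1, hcol, zero_dotProduct, smul_zero, sub_zero]

theorem sum_centered_sq_le (x : n → ℝ) : ∑ i, centered x i ^ 2 ≤ ∑ i, x i ^ 2 := by
  rw [sum_centered_sq]
  have : 0 ≤ (∑ i, x i) ^ 2 / Fintype.card n := by positivity
  linarith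

end Centering

theorem Matrix.IsSymm.dotProduct_mulVec_comm_s14 {n R : Type*} [Fintype n] [CommSemiring R]
    {A : Matrix n n R} (hA : A.IsSymm) (x y : n → R) :
    x ⬝ᵥ (A *ᵥ y) = y ⬝ᵥ (A *ᵥ x) := by
  rw [dotProduct_mulVec, ← hA.eq, vecMul_transpose, dotProduct_comm, hA.eq]

section Polarization
variable {n : Type*} [Fintype n] {A : Matrix n n ℝ} {ρ : ℝ}
  (hspec : ∀ p : n → ℝ, ∑ i, p i = 0 → |p ⬝ᵥ (A *ᵥ p)| ≤ ρ * ∑ i, p i ^ 2)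
include hspec

theorem abs_dotProduct_mulVec_le_of_isSymm (hA : A.IsSymm) {p q : n → ℝ}
    (hp : ∑ i, p i = 0) (hq : ∑ i, q i = 0) :
    |p ⬝ᵥ (A *ᵥ q)| ≤ ρ / 2 * (∑ i, p i ^ 2 + ∑ i, q i ^ 2) := by
  have polarization : 4 * (p ⬝ᵥ (A *ᵥ q)) =
      (p + q) ⬝ᵥ (A *ᵥ (p + q)) - (p - q) ⬝ᵥ (A *ᵥ (p - q)) := by
    simp only [mulVec_add, mulVec_sub, dotProduct_add, dotProduct_sub, add_dotProduct,
      sub_dotProduct, hA.dotProduct_mulVec_comm_s14 q p]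
    ring
  have parallelogram : ∑ i, (p + q) i ^ 2 + ∑ i, (p - q) i ^ 2 =
      2 * (∑ i, p i ^ 2 + ∑ i, q i ^ 2) := by
    simp only [Pi.add_apply, Pi.sub_apply, ← Finset.sum_add_distrib, Finset.mul_sum]
    exact Finset.sum_congr rfl fun i _ => by ring
  have hadd := hspec (p + q) (by simp [Finset.sum_add_distrib, hp, hq])
  have hsub := hspec (p - q) (by simp [Finset.sum_sub_distrib, hp, hq])
  have := abs_sub ((p + q) ⬝ᵥ (A *ᵥ (p + q))) ((p - q) ⬝ᵥ (A *ᵥ (p - q)))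
  rw [← polarization, abs_mul, abs_of_pos four_pos] at this
  have : ρ * ∑ i, (p + q) i ^ 2 + ρ * ∑ i, (p - q) i ^ 2 =
      4 * (ρ / 2 * (∑ i, p i ^ 2 + ∑ i, q i ^ 2)) := by
    rw [← mul_add, parallelogram]; ring
  linarith

theorem nonneg_of_abs_dotProduct_mulVec_le_s14 {u w : n} (huw : u ≠ w) : 0 ≤ ρ := by
  classical
  set p : n → ℝ := Pi.single u 1 - Pi.single w 1
  have hsq : ∑ i, p i ^ 2 = 2 := by
    norm_num [p, sub_sq, Finset.sum_add_distrib, Finset.sum_sub_distrib, Pi.single_apply,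
      huw.symm]
  have := hspec p (by simp [p])
  rw [hsq] at this
  linarith [abs_nonneg (p ⬝ᵥ (A *ᵥ p))]

end Polarization

namespace SimpleGraph

variable {V : Type*} [Fintype V] (G : SimpleGraph V) [DecidableRel G.Adj]

theorem sum_adjMatrix_apply {R : Type*} [NonAssocSemiring R] (v : V) :
    ∑ w, G.adjMatrix R v w = G.degree v := by
  simp [← G.card_neighborFinset_eq_degree, G.neighborFinset_eq_filter]

theorem sum_sum_adjMatrix_mul_left (S : V → ℝ) :
    ∑ v, ∑ w, G.adjMatrix ℝ v w * S v = ∑ v, G.degree v * S v := by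
  simp only [← Finset.sum_mul, sum_adjMatrix_apply]

theorem sum_sum_adjMatrix_mul_right (S : V → ℝ) :
    ∑ v, ∑ w, G.adjMatrix ℝ v w * S w = ∑ v, G.degree v * S v := by
  rw [Finset.sum_comm, ← G.sum_sum_adjMatrix_mul_left]
  simp only [← G.isSymm_adjMatrix.apply]

theorem abs_sum_sum_adjMatrix_mul_le {Δ : ℕ} (hΔ : ∀ v, G.degree v ≤ Δ) {S : V → ℝ}
    (hS : 0 ≤ S) {g : V → V → ℝ} (hg : ∀ v w, |g v w| ≤ (S v + S w) / 2) :
    |∑ v, ∑ w, G.adjMatrix ℝ v w * g v w| ≤ Δ * ∑ v, S v := by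
  have hA : ∀ v w, 0 ≤ G.adjMatrix ℝ v w := fun v w => by
    rw [adjMatrix_apply]; split_ifs <;> norm_num
  calc |∑ v, ∑ w, G.adjMatrix ℝ v w * g v w|
      ≤ ∑ v, ∑ w, G.adjMatrix ℝ v w * ((S v + S w) / 2) := by
        refine (Finset.abs_sum_le_sum_abs _ _).trans (Finset.sum_le_sum fun v _ => ?_)
        refine (Finset.abs_sum_le_sum_abs _ _).trans (Finset.sum_le_sum fun w _ => ?_)
        rw [abs_mul, abs_of_nonneg (hA v w)]
        exact mul_le_mul_of_nonneg_left (hg v w) (hA v w)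
    _ = (∑ v, ∑ w, G.adjMatrix ℝ v w * S v + ∑ v, ∑ w, G.adjMatrix ℝ v w * S w) / 2 := by
        simp only [← Finset.sum_add_distrib, Finset.sum_div]
        exact Finset.sum_congr rfl fun v _ => Finset.sum_congr rfl fun w _ => by ring
    _ = ∑ v, G.degree v * S v := by
        rw [sum_sum_adjMatrix_mul_left, sum_sum_adjMatrix_mul_right]; ring
    _ ≤ Δ * ∑ v, S v := by
        rw [Finset.mul_sum]
        exact Finset.sum_le_sum fun v _ =>
          mul_le_mul_of_nonneg_right (by exact_mod_cast hΔ v) (hS v)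

end SimpleGraph

theorem SimpleGraph.IsRegularOfDegree.inv_smul_adjMatrix_sub_mulVec_one {U : Type*} [Fintype U]
    [Nonempty U] {H : SimpleGraph U} [DecidableRel H.Adj] {d : ℕ} (hreg : H.IsRegularOfDegree d)
    (hd : d ≠ 0) :
    ((d : ℝ)⁻¹ • H.adjMatrix ℝ - of fun _ _ : U => (Fintype.card U : ℝ)⁻¹) *ᵥ 1 = 0 := by
  ext v
  rw [sub_mulVec, smul_mulVec, Pi.sub_apply, Pi.smul_apply,
    show (1 : U → ℝ) = Function.const U 1 from rfl, adjMatrix_mulVec_const_apply_of_regular hreg]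
  simp [mulVec, dotProduct, hd]

/-- Let `G` have maximum degree at most `Δ` and adjacency matrix `A`, and let `H` be a
`d`-regular graph (`d ≥ 1`) on `N` vertices whose adjacency matrix `A_H` satisfies
`|pᵀ A_H p| ≤ ρ‖p‖²` for every `p` orthogonal to the all-ones vector.  With `B = (1/d)·A_H`
and `J̃_N` the `N×N` matrix of all `1/N`s, every `f ∈ ℝ^{n×N}` satisfies
`|fᵀ (A ⊗ (B − J̃_N)) f| ≤ (Δρ/d)·‖f‖²`. -/
theorem quadForm_kronecker_bound {V U : Type*} [Fintype V] [Fintype U]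
    (G : SimpleGraph V) [DecidableRel G.Adj]
    (H : SimpleGraph U) [DecidableRel H.Adj]
    (Δ d : ℕ) (hd : 1 ≤ d) (hΔ : ∀ v, G.degree v ≤ Δ)
    (hreg : H.IsRegularOfDegree d) (ρ : ℝ)
    (hspec : ∀ p : U → ℝ, ∑ i, p i = 0 →
      abs (p ⬝ᵥ (H.adjMatrix ℝ *ᵥ p)) ≤ ρ * ∑ i, (p i) ^ 2)
    (f : V × U → ℝ) :
    abs (f ⬝ᵥ (((G.adjMatrix ℝ) ⊗ₖ
        ((d : ℝ)⁻¹ • H.adjMatrix ℝ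
          - Matrix.of fun _ _ : U => (Fintype.card U : ℝ)⁻¹)) *ᵥ f))
      ≤ ((Δ : ℝ) * ρ / d) * ∑ x : V × U, (f x) ^ 2 := by
  rcases isEmpty_or_nonempty U with hU | hU
  · simp
  obtain ⟨u, w, huw⟩ : ∃ u w, H.Adj u w :=
    ⟨_, (H.degree_pos_iff_exists_adj (Classical.arbitrary U)).mp (by rw [hreg]; omega)⟩
  have hρ : 0 ≤ ρ := nonneg_of_abs_dotProduct_mulVec_le_s14 hspec (H.ne_of_adj huw)
  set M := (d : ℝ)⁻¹ • H.adjMatrix ℝ - of fun _ _ : U => (Fintype.card U : ℝ)⁻¹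
  have hrow : M *ᵥ 1 = 0 := hreg.inv_smul_adjMatrix_sub_mulVec_one (by omega)
  have hcol : 1 ᵥ* M = 0 := by
    have hM : M.IsSymm := (H.isSymm_adjMatrix.smul _).sub (IsSymm.ext fun _ _ => rfl)
    rw [← hM.eq, vecMul_transpose, hrow]
  set p := fun v => centered (Function.curry f v)
  have hpair : ∀ v w, |Function.curry f v ⬝ᵥ (M *ᵥ Function.curry f w)| ≤
      (ρ / d * ∑ i, p v i ^ 2 + ρ / d * ∑ i, p w i ^ 2) / 2 := by
    intro v w
    rw [← centered_dotProduct_mulVec_centered hrow hcol,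
      dotProduct_smul_sub_const_mulVec_of_sum_eq_zero _ _ _ _ (sum_centered _), abs_mul, abs_inv,
      Nat.abs_cast]
    refine (mul_le_mul_of_nonneg_left (abs_dotProduct_mulVec_le_of_isSymm hspec
      H.isSymm_adjMatrix (sum_centered _) (sum_centered _)) (by positivity)).trans_eq ?_
    ring
  rw [dotProduct_kronecker_mulVec]
  calc _ ≤ Δ * ∑ v, ρ / d * ∑ i, p v i ^ 2 :=
        G.abs_sum_sum_adjMatrix_mul_le hΔ (fun v => by positivity) hpair
    _ ≤ Δ * ∑ v, ρ / d * ∑ i, f (v, i) ^ 2 := by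
        gcongr Δ * ∑ v, _ * ?_ with v
        exact sum_centered_sq_le _
    _ = _ := by
        rw [Fintype.sum_prod_type, ← Finset.mul_sum]; ring
end

section
/- For every ε > 0 and every finite simple graph G on a nonempty vertex set, there exists a finite simple triangle-free graph Ĝ on a nonempty vertex set such that rel-IS(G) ≤ rel-IS(Ĝ) ≤ (1 + ε)·rel-IS(G), where rel-IS denotes the maximum independent set size divided by the number of vertices. -/
/-- `rel-IS(G) = IS(G)/|V(G)|`: the maximum independent set size divided by the number of
vertices. -/
noncomputable def relIS (V : Type*) [Fintype V] (G : SimpleGraph V) : ℝ :=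
  (indepNum V G : ℝ) / (Fintype.card V : ℝ)

/-!
Erdős's deletion argument gives, for every `m`, a triangle-free graph `H` with
`m * α(H) < |H|`. In the random graph on `n = 8 ^ L` vertices with edge probability `1 / q`,
`q = 2 ^ (2L + 1)`, the expected number of triangles is at most `n / 48`, and the expected number
of independent sets of size `s = 2q(3L + 1) + 1` is at most `2 ^ (-s)`; so some graph has fewer than
`n / 6` triangles and `α < s`, and removing every vertex of every triangle keeps more than `n / 2`
vertices, which is more than `m * s` once `16 m (3L + 1) ≤ 2 ^ L`.

Replacing each vertex of `H` by an independent set of size `|V|` gives a triangle-free graph on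
`|V| * |H|` vertices with `α ≤ |H| ≤ α(G) * |H|`. Deleting its edges one at a time raises `α` by at
most one per step and ends at `|V| * |H|`, so some stage has `α` exactly `α(G) * |H|`, i.e. the same
relative independence number as `G`.
-/

open Finset

theorem indepNum_eq_simpleGraph_indepNum {V : Type*} [Fintype V] (G : SimpleGraph V) :
    indepNum V G = G.indepNum := by
  unfold indepNum SimpleGraph.indepNum
  congr! 3 with k
  refine exists_congr fun I => (G.isNIndepSet_iff ..).trans (and_congr_left fun _ => ?_) |>.symm
  exact ⟨fun h u hu v hv huv => h hu hv (G.ne_of_adj huv) huv, fun h u hu v hv _ => h u hu v hv⟩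

theorem relIS_eq {V : Type*} [Fintype V] (G : SimpleGraph V) :
    relIS V G = G.indepNum / Fintype.card V := by
  rw [relIS, indepNum_eq_simpleGraph_indepNum]

theorem Finset.card_filter_forall_mem_mul_pow {α β : Type*} [Fintype α] [DecidableEq α]
    [Fintype β] [DecidableEq β] (K : Finset α) (A : Finset β) :
    #{f : α → β | ∀ a ∈ K, f a ∈ A} * Fintype.card β ^ #K =
      #A ^ #K * Fintype.card β ^ Fintype.card α := by
  have hpi : ({f : α → β | ∀ a ∈ K, f a ∈ A} : Finset _) =
      Fintype.piFinset fun a => if a ∈ K then A else univ := by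
    ext f
    simp only [mem_filter, mem_univ, true_and, Fintype.mem_piFinset]
    exact ⟨fun h a => by split_ifs with ha <;> simp [h a, ha],
      fun h a ha => by simpa [ha] using h a⟩
  simp only [hpi, Fintype.card_piFinset, apply_ite card, card_univ, prod_ite, filter_mem_eq_inter,
    univ_inter, prod_const, mul_assoc, ← pow_add, filter_not, card_sdiff, card_univ, inter_univ]
  rw [Nat.sub_add_cancel (card_le_univ K)]

namespace SimpleGraph

section IndependenceNumber

variable {V W : Type*}

theorem indepNum_le_card [Fintype V] (G : SimpleGraph V) : G.indepNum ≤ Fintype.card V := by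
  obtain ⟨I, hI⟩ := G.exists_isNIndepSet_indepNum
  exact hI.card_eq ▸ card_le_univ I

theorem one_le_indepNum [Finite V] [Nonempty V] (G : SimpleGraph V) : 1 ≤ G.indepNum := by
  classical
  simpa using IsIndepSet.card_le_indepNum (G := G) (t := {Classical.arbitrary V}) (by simp)

theorem CliqueFree.of_hom {G : SimpleGraph V} {H : SimpleGraph W} {n : ℕ} (φ : G →g H)
    (h : H.CliqueFree n) : G.CliqueFree n := by
  classical
  intro t ht
  have hinj : Set.InjOn φ t := fun x hx y hy hxy => by
    by_contra hne
    exact (H.ne_of_adj (φ.map_adj (ht.isClique hx hy hne))) hxy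
  refine h (t.image φ) ⟨?_, by rw [card_image_of_injOn hinj, ht.card_eq]⟩
  rw [coe_image]
  rintro _ ⟨x, hx, rfl⟩ _ ⟨y, hy, rfl⟩ hne
  exact φ.map_adj (ht.isClique hx hy fun h => hne (h ▸ rfl))

theorem Embedding.indepNum_le [Finite W] {G : SimpleGraph V} {H : SimpleGraph W} (φ : G ↪g H) :
    G.indepNum ≤ H.indepNum := by
  classical
  obtain ⟨I, hI⟩ := G.exists_isNIndepSet_indepNum
  rw [← hI.card_eq, ← card_map φ.toEmbedding]
  refine IsIndepSet.card_le_indepNum ?_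
  rw [coe_map]
  rintro _ ⟨x, hx, rfl⟩ _ ⟨y, hy, rfl⟩ hne hadj
  exact hI.isIndepSet hx hy (fun h => hne (h ▸ rfl)) (φ.map_adj_iff.mp hadj)

theorem indepNum_comap_snd_le [Fintype V] [Finite W] (H : SimpleGraph W) :
    (H.comap (Prod.snd : V × W → W)).indepNum ≤ Fintype.card V * H.indepNum := by
  classical
  obtain ⟨I, hI⟩ := (H.comap (Prod.snd : V × W → W)).exists_isNIndepSet_indepNum
  have hproj : H.IsIndepSet (I.image Prod.snd : Set W) := by
    rw [coe_image]
    rintro _ ⟨x, hx, rfl⟩ _ ⟨y, hy, rfl⟩ hne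
    exact hI.isIndepSet hx hy (fun h => hne (h ▸ rfl))
  calc (H.comap (Prod.snd : V × W → W)).indepNum = #I := hI.card_eq.symm
    _ ≤ #(univ ×ˢ I.image Prod.snd) := card_le_card fun x hx => by simp [mem_image_of_mem _ hx]
    _ ≤ Fintype.card V * H.indepNum := by
      rw [card_product, card_univ]
      exact Nat.mul_le_mul_left _ hproj.card_le_indepNum

theorem indepNum_deleteEdges_singleton_le [Finite V] (G : SimpleGraph V) (e : Sym2 V) :
    (G.deleteEdges {e}).indepNum ≤ G.indepNum + 1 := by
  classical
  induction e using Sym2.ind with | _ u v => ?_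
  obtain ⟨I, hI⟩ := (G.deleteEdges {s(u, v)}).exists_isNIndepSet_indepNum
  have hIu : G.IsIndepSet ↑(I.erase u) := by
    intro x hx y hy hne hadj
    rw [coe_erase, Set.mem_sdiff, Set.mem_singleton_iff] at hx hy
    refine hI.isIndepSet hx.1 hy.1 hne ((deleteEdges_adj ..).mpr ⟨hadj, fun h => ?_⟩)
    rcases Sym2.eq_iff.mp h with ⟨rfl, -⟩ | ⟨-, rfl⟩
    exacts [hx.2 rfl, hy.2 rfl]
  calc (G.deleteEdges {s(u, v)}).indepNum = #I := hI.card_eq.symm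
    _ ≤ #(I.erase u) + 1 := by have := pred_card_le_card_erase (s := I) (a := u); omega
    _ ≤ G.indepNum + 1 := by gcongr; exact hIu.card_le_indepNum

theorem exists_le_indepNum_eq [Fintype V] {G : SimpleGraph V} {a : ℕ} (hG : G.indepNum ≤ a)
    (ha : a ≤ Fintype.card V) : ∃ H ≤ G, H.indepNum = a := by
  classical
  suffices key : ∀ s : Finset (Sym2 V), a ≤ (G.deleteEdges s).indepNum → ∃ H ≤ G, H.indepNum = a by
    refine key univ (ha.trans ?_)
    rw [coe_univ, deleteEdges_univ, ← card_univ]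
    exact IsIndepSet.card_le_indepNum fun _ _ _ _ _ h => h
  intro s
  induction s using Finset.induction_on with
  | empty =>
    intro h
    rw [coe_empty, deleteEdges_empty] at h
    exact ⟨G, le_rfl, le_antisymm hG h⟩
  | insert e s _ ih =>
    intro h
    rcases le_or_gt a (G.deleteEdges s).indepNum with hs | hs
    · exact ih hs
    · refine ⟨_, deleteEdges_le _, le_antisymm ?_ h⟩
      have := indepNum_deleteEdges_singleton_le (G.deleteEdges s) e
      rw [deleteEdges_deleteEdges, Set.union_singleton, ← coe_insert] at this
      omega

end IndependenceNumber

section RandomGraph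

variable {V β : Type*} [DecidableEq V]

theorem isClique_fromEdgeSet_iff {S : Set (Sym2 V)} {t : Finset V} :
    (fromEdgeSet S).IsClique (t : Set V) ↔ ∀ e ∈ t.offDiag.image Sym2.mk.uncurry, e ∈ S := by
  simp only [isClique_iff, Set.Pairwise, fromEdgeSet_adj, forall_mem_image, Prod.forall,
    mem_offDiag, mem_coe, Function.uncurry_apply_pair]
  grind

theorem isIndepSet_fromEdgeSet_iff {S : Set (Sym2 V)} {t : Finset V} :
    (fromEdgeSet S).IsIndepSet (t : Set V) ↔ ∀ e ∈ t.offDiag.image Sym2.mk.uncurry, e ∉ S := by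
  simp only [isIndepSet_iff, Set.Pairwise, fromEdgeSet_adj, forall_mem_image, Prod.forall,
    mem_offDiag, mem_coe, Function.uncurry_apply_pair]
  grind

variable [Fintype V] [Fintype β] [DecidableEq β]

open scoped Classical in
theorem card_isClique_fromEdgeSet_mul_pow (b : β) (t : Finset V) :
    #{f : Sym2 V → β | (fromEdgeSet {e | f e = b}).IsClique (t : Set V)} *
      Fintype.card β ^ (#t).choose 2 = Fintype.card β ^ Fintype.card (Sym2 V) := by
  have := card_filter_forall_mem_mul_pow (t.offDiag.image Sym2.mk.uncurry) {b}
  rw [Sym2.card_image_offDiag, card_singleton, one_pow, one_mul] at this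
  convert this using 3
  simp [isClique_fromEdgeSet_iff]

open scoped Classical in
theorem card_isIndepSet_fromEdgeSet_mul_pow (b : β) (t : Finset V) :
    #{f : Sym2 V → β | (fromEdgeSet {e | f e = b}).IsIndepSet (t : Set V)} *
      Fintype.card β ^ (#t).choose 2 =
      (Fintype.card β - 1) ^ (#t).choose 2 * Fintype.card β ^ Fintype.card (Sym2 V) := by
  have := card_filter_forall_mem_mul_pow (t.offDiag.image Sym2.mk.uncurry) {b}ᶜ
  rw [Sym2.card_image_offDiag, card_compl, card_singleton] at this
  convert this using 3
  simp [isIndepSet_fromEdgeSet_iff]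

open scoped Classical in
theorem sum_card_cliqueFinset_three_fromEdgeSet_mul_pow (b : β) :
    (∑ f : Sym2 V → β, #((fromEdgeSet {e | f e = b}).cliqueFinset 3)) * Fintype.card β ^ 3 =
      (Fintype.card V).choose 3 * Fintype.card β ^ Fintype.card (Sym2 V) := by
  have hcliques (f : Sym2 V → β) : (fromEdgeSet {e | f e = b}).cliqueFinset 3 =
      (powersetCard 3 univ).filter fun t : Finset V => (fromEdgeSet {e | f e = b}).IsClique ↑t := by
    ext t
    simp [mem_cliqueFinset_iff, isNClique_iff, mem_powersetCard, and_comm]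
  simp_rw [hcliques]
  have hswap := sum_card_bipartiteAbove_eq_sum_card_bipartiteBelow (s := univ)
    (t := powersetCard 3 univ) (r := fun (f : Sym2 V → β) (t : Finset V) =>
      (fromEdgeSet {e | f e = b}).IsClique (t : Set V))
  simp only [bipartiteAbove, bipartiteBelow] at hswap
  rw [hswap, sum_mul, ← card_univ (α := V), ← card_powersetCard, ← smul_eq_mul, ← sum_const]
  refine sum_congr rfl fun t ht => ?_
  have := card_isClique_fromEdgeSet_mul_pow b t
  rwa [(mem_powersetCard.mp ht).2] at this

open scoped Classical in
theorem card_le_indepNum_fromEdgeSet_mul_pow_le (b : β) (s : ℕ) :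
    #{f : Sym2 V → β | s ≤ (fromEdgeSet {e | f e = b}).indepNum} * Fintype.card β ^ s.choose 2 ≤
      (Fintype.card V).choose s *
        ((Fintype.card β - 1) ^ s.choose 2 * Fintype.card β ^ Fintype.card (Sym2 V)) := by
  have hcover : ({f : Sym2 V → β | s ≤ (fromEdgeSet {e | f e = b}).indepNum} : Finset _) ⊆
      (powersetCard s univ).biUnion
        fun t : Finset V => {f | (fromEdgeSet {e | f e = b}).IsIndepSet (t : Set V)} := by
    intro f hf
    obtain ⟨I, hI⟩ := (fromEdgeSet {e | f e = b}).exists_isNIndepSet_indepNum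
    obtain ⟨t, htI, ht⟩ := exists_subset_card_eq ((mem_filter.mp hf).2.trans hI.card_eq.ge)
    simp only [mem_biUnion, mem_powersetCard, mem_filter]
    exact ⟨t, ⟨subset_univ t, ht⟩, mem_univ f, hI.isIndepSet.mono (coe_subset.mpr htI)⟩
  calc _ ≤ (∑ t ∈ powersetCard s (univ : Finset V),
        #{f : Sym2 V → β | (fromEdgeSet {e | f e = b}).IsIndepSet (t : Set V)}) *
          Fintype.card β ^ s.choose 2 :=
        Nat.mul_le_mul_right _ ((card_le_card hcover).trans card_biUnion_le)
    _ = ∑ t ∈ powersetCard s (univ : Finset V),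
        (Fintype.card β - 1) ^ s.choose 2 * Fintype.card β ^ Fintype.card (Sym2 V) := by
        rw [sum_mul]
        refine sum_congr rfl fun t ht => ?_
        have := card_isIndepSet_fromEdgeSet_mul_pow b t
        rwa [(mem_powersetCard.mp ht).2] at this
    _ = _ := by rw [sum_const, card_powersetCard, card_univ, smul_eq_mul]

open scoped Classical in
/-- For uniformly random `f`, `fromEdgeSet {e | f e = b}` contains each edge independently with
probability `1 / |β|`; the hypothesis says `E[6 * #triangles] + 2|V| * P(α ≥ s) < |V|`. -/
theorem exists_fromEdgeSet_few_triangles_indepNum_lt (b : β) {s : ℕ}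
    (h : 6 * ((Fintype.card V).choose 3 : ℝ) / Fintype.card β ^ 3 +
      2 * Fintype.card V * (Fintype.card V).choose s * (1 - 1 / Fintype.card β) ^ s.choose 2 <
        Fintype.card V) :
    ∃ f : Sym2 V → β, 6 * #((fromEdgeSet {e | f e = b}).cliqueFinset 3) < Fintype.card V ∧
      (fromEdgeSet {e | f e = b}).indepNum < s := by
  have htri := sum_card_cliqueFinset_three_fromEdgeSet_mul_pow (V := V) b
  have hbad := card_le_indepNum_fromEdgeSet_mul_pow_le (V := V) b s
  set n := Fintype.card V
  set q := Fintype.card β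
  set N := Fintype.card (Sym2 V)
  set T := ∑ f : Sym2 V → β, #((fromEdgeSet {e | f e = b}).cliqueFinset 3)
  set B := #{f : Sym2 V → β | s ≤ (fromEdgeSet {e | f e = b}).indepNum}
  have hq : 1 ≤ q := Fintype.card_pos_iff.mpr ⟨b⟩
  have hqR : (0 : ℝ) < q := by exact_mod_cast hq
  have hT : (T : ℝ) = q ^ N * (n.choose 3 / q ^ 3) := by
    rw [mul_div_assoc', eq_div_iff (by positivity), mul_comm _ (n.choose 3 : ℝ)]
    exact_mod_cast htri
  have hB : (B : ℝ) ≤ q ^ N * (n.choose s * (1 - 1 / q) ^ s.choose 2) := by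
    rw [one_sub_div hqR.ne', div_pow, ← mul_div_assoc, ← mul_div_assoc, le_div_iff₀ (by positivity)]
    have : ((q - 1 : ℕ) : ℝ) = q - 1 := by push_cast [hq]; ring
    rw [← this]
    exact_mod_cast hbad.trans_eq (by ring)
  have hsum : ∑ f : Sym2 V → β,
      (6 * #((fromEdgeSet {e | f e = b}).cliqueFinset 3) +
        2 * n * if s ≤ (fromEdgeSet {e | f e = b}).indepNum then 1 else 0) <
      ∑ _f : Sym2 V → β, n := by
    rw [sum_add_distrib, ← mul_sum, ← mul_sum, sum_boole, sum_const, card_univ,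
      Fintype.card_fun, smul_eq_mul]
    have : (6 * T + 2 * n * B : ℝ) < q ^ N * n :=
      calc (6 * T + 2 * n * B : ℝ)
          ≤ 6 * T + 2 * n * (q ^ N * (n.choose s * (1 - 1 / q) ^ s.choose 2)) := by gcongr
        _ = q ^ N * (6 * (n.choose 3 : ℝ) / q ^ 3 +
            2 * n * n.choose s * (1 - 1 / q) ^ s.choose 2) := by rw [hT]; ring
        _ < q ^ N * n := by gcongr
    exact_mod_cast this
  obtain ⟨f, -, hf⟩ := exists_lt_of_sum_lt hsum
  refine ⟨f, ?_, ?_⟩ <;> split_ifs at hf with hs <;> omega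

end RandomGraph

theorem exists_induce_cliqueFree_three {V : Type*} [Fintype V] [DecidableEq V]
    (G : SimpleGraph V) [DecidableRel G.Adj] :
    ∃ S : Finset V, (G.induce (S : Set V)).CliqueFree 3 ∧
      Fintype.card V ≤ #S + 3 * #(G.cliqueFinset 3) := by
  set T := (G.cliqueFinset 3).biUnion id
  refine ⟨Tᶜ, ?_, ?_⟩
  · rw [cliqueFree_induce_iff]
    intro t htT ht
    obtain ⟨x, hx⟩ := card_pos.mp (ht.card_eq ▸ three_pos)
    exact mem_compl.mp (htT hx) (subset_biUnion_of_mem id (mem_cliqueFinset_iff.mpr ht) hx)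
  · have hT : #T ≤ #(G.cliqueFinset 3) * 3 :=
      card_biUnion_le_card_mul _ _ _ fun t ht => (mem_cliqueFinset_iff.mp ht).card_eq.le
    rw [card_compl]
    have := card_le_univ T
    omega

end SimpleGraph

theorem one_sub_one_div_pow_self_le_half {q : ℕ} (hq : 1 ≤ q) : (1 - 1 / (q : ℝ)) ^ q ≤ 1 / 2 :=
  (Real.one_sub_div_pow_le_exp_neg (by exact_mod_cast hq)).trans <| by
    rw [Real.exp_neg, one_div]
    exact inv_anti₀ two_pos Real.exp_one_gt_two.le

theorem exists_mul_three_mul_add_one_le_two_pow (c : ℕ) : ∃ L : ℕ, c * (3 * L + 1) ≤ 2 ^ L := by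
  set K := c + 4
  have hc : c ≤ 2 ^ K := (Nat.lt_two_pow_self).le.trans' (by omega)
  have hK : K ≤ 2 ^ K := Nat.lt_two_pow_self.le
  have h10 : 10 ≤ 2 ^ K := le_trans (by norm_num) (Nat.pow_le_pow_right two_pos (by omega : 4 ≤ K))
  refine ⟨3 * K, ?_⟩
  calc c * (3 * (3 * K) + 1) ≤ 2 ^ K * (10 * K) := by gcongr; omega
    _ ≤ 2 ^ K * (2 ^ K * 2 ^ K) := by gcongr
    _ = 2 ^ (3 * K) := by ring

theorem deletion_estimate_lt_of_eq_two_pow {L n q s : ℕ} (hn : n = 2 ^ (3 * L))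
    (hq : q = 2 ^ (2 * L + 1)) (hs : s = 2 * q * (3 * L + 1) + 1) :
    6 * (n.choose 3 : ℝ) / q ^ 3 + 2 * n * n.choose s * (1 - 1 / q) ^ s.choose 2 < n := by
  have hq1 : 1 ≤ q := hq ▸ Nat.one_le_two_pow
  have hnR : (n : ℝ) = 2 ^ (3 * L) := by rw [hn]; push_cast; rfl
  have hqR : (q : ℝ) = 2 ^ (2 * L + 1) := by rw [hq]; push_cast; rfl
  have hchoose3 : 6 * (n.choose 3 : ℝ) ≤ n ^ 3 := by
    have := Nat.choose_le_pow_div (α := ℝ) 3 n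
    norm_num [Nat.factorial] at this
    linarith
  have hchoose : (n.choose s : ℝ) ≤ n ^ s := by exact_mod_cast Nat.choose_le_pow n s
  have hs2 : s.choose 2 = q * (s * (3 * L + 1)) := by
    rw [Nat.choose_two_right, hs, Nat.add_sub_cancel, ← hs,
      show s * (2 * q * (3 * L + 1)) = 2 * (q * (s * (3 * L + 1))) by ring,
      Nat.mul_div_cancel_left _ two_pos]
  have hq' : 0 ≤ 1 - 1 / (q : ℝ) :=
    sub_nonneg.mpr (div_le_one_of_le₀ (by exact_mod_cast hq1) (by positivity))
  have hpow : (1 - 1 / (q : ℝ)) ^ s.choose 2 ≤ (1 / 2) ^ (s * (3 * L + 1)) := by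
    rw [hs2, pow_mul]
    gcongr
    exact one_sub_one_div_pow_self_le_half hq1
  have htri : (n : ℝ) ^ 3 / q ^ 3 = n / 8 := by
    rw [hnR, hqR]
    field_simp
    ring
  have hindep : (n : ℝ) ^ s * (1 / 2) ^ (s * (3 * L + 1)) = 1 / 2 ^ s := by
    rw [hnR, one_div_pow, ← pow_mul, show s * (3 * L + 1) = 3 * L * s + s by ring, pow_add]
    field_simp
  have h8 : (8 : ℝ) ≤ 2 ^ s :=
    calc (8 : ℝ) = 2 ^ 3 := by norm_num
      _ ≤ 2 ^ s := pow_le_pow_right₀ one_le_two (by rw [hs]; nlinarith)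
  have hn0 : (0 : ℝ) < n := by rw [hnR]; positivity
  calc 6 * (n.choose 3 : ℝ) / q ^ 3 + 2 * n * n.choose s * (1 - 1 / q) ^ s.choose 2
      ≤ n ^ 3 / q ^ 3 + 2 * n * (n ^ s * (1 / 2) ^ (s * (3 * L + 1))) := by
        rw [← mul_assoc]
        gcongr
    _ = (n : ℝ) / 8 + 2 * n / 2 ^ s := by rw [htri, hindep]; ring
    _ ≤ (n : ℝ) / 8 + 2 * n / 8 := by gcongr
    _ < (n : ℝ) := by linarith

theorem exists_deletion_parameters (m : ℕ) : ∃ n q s : ℕ, 0 < q ∧ 2 * m * s ≤ n ∧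
    6 * (n.choose 3 : ℝ) / q ^ 3 + 2 * n * n.choose s * (1 - 1 / q) ^ s.choose 2 < n := by
  obtain ⟨L, hL⟩ := exists_mul_three_mul_add_one_le_two_pow (16 * m)
  refine ⟨2 ^ (3 * L), 2 ^ (2 * L + 1), 2 * 2 ^ (2 * L + 1) * (3 * L + 1) + 1, Nat.two_pow_pos _,
    ?_, deletion_estimate_lt_of_eq_two_pow rfl rfl rfl⟩
  have : 1 ≤ 2 ^ (2 * L + 1) * (3 * L + 1) := Nat.one_le_iff_ne_zero.mpr (by positivity)
  calc 2 * m * (2 * 2 ^ (2 * L + 1) * (3 * L + 1) + 1)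
      ≤ 2 * m * (4 * 2 ^ (2 * L + 1) * (3 * L + 1)) := by gcongr; linarith
    _ = 16 * m * (3 * L + 1) * 2 ^ (2 * L) := by ring
    _ ≤ 2 ^ L * 2 ^ (2 * L) := by gcongr
    _ = 2 ^ (3 * L) := by ring

namespace SimpleGraph

theorem exists_cliqueFree_three_mul_indepNum_lt (m : ℕ) :
    ∃ (W : Type) (_ : Fintype W) (H : SimpleGraph W),
      H.CliqueFree 3 ∧ m * H.indepNum < Fintype.card W := by
  classical
  obtain ⟨n, q, s, hq, hms, h⟩ := exists_deletion_parameters m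
  obtain ⟨f, htri, hindep⟩ := exists_fromEdgeSet_few_triangles_indepNum_lt (V := Fin n)
    (⟨0, hq⟩ : Fin q) (s := s) (by simpa using h)
  set G : SimpleGraph (Fin n) := fromEdgeSet {e | f e = ⟨0, hq⟩}
  obtain ⟨S, hS, hcard⟩ := G.exists_induce_cliqueFree_three
  refine ⟨S, inferInstance, G.induce S, hS, ?_⟩
  have hα : m * (G.induce S).indepNum ≤ m * s :=
    Nat.mul_le_mul_left m ((Embedding.induce _).indepNum_le.trans hindep.le)
  rw [Fintype.card_fin] at htri hcard
  rw [Fintype.card_coe]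
  linarith

end SimpleGraph

/-- For every `ε > 0` and every finite simple graph `G` on a nonempty vertex set, there is a
finite triangle-free simple graph `Ĝ` on a nonempty vertex set with
`rel-IS(G) ≤ rel-IS(Ĝ) ≤ (1 + ε)·rel-IS(G)`. -/
theorem exists_triangleFree_relIS_approx (ε : ℝ) (hε : 0 < ε)
    (V : Type) [Fintype V] [Nonempty V] (G : SimpleGraph V) :
    ∃ (W : Type) (instW : Fintype W) (_ : Nonempty W) (Ghat : SimpleGraph W),
      Ghat.CliqueFree 3 ∧
      relIS V G ≤ @relIS W instW Ghat ∧
      @relIS W instW Ghat ≤ (1 + ε) * relIS V G := by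
  obtain ⟨W, _, H, hH, hHα⟩ := SimpleGraph.exists_cliqueFree_three_mul_indepNum_lt (Fintype.card V)
  have : Nonempty W := Fintype.card_pos_iff.mp (hHα.trans_le' (Nat.zero_le _))
  have hblowup : (H.comap (Prod.snd : V × W → W)).indepNum ≤ G.indepNum * Fintype.card W :=
    calc _ ≤ Fintype.card V * H.indepNum := H.indepNum_comap_snd_le
      _ ≤ Fintype.card W := hHα.le
      _ ≤ G.indepNum * Fintype.card W := Nat.le_mul_of_pos_left _ G.one_le_indepNum
  obtain ⟨Ghat, hle, hGhat⟩ := SimpleGraph.exists_le_indepNum_eq hblowup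
    (by rw [Fintype.card_prod]; gcongr; exact G.indepNum_le_card)
  have hrel : relIS (V × W) Ghat = relIS V G := by
    rw [relIS_eq, relIS_eq, hGhat, Fintype.card_prod]
    push_cast
    field_simp
  refine ⟨V × W, inferInstance, inferInstance, Ghat, (hH.of_hom ⟨Prod.snd, id⟩).anti hle,
    hrel.ge, hrel.le.trans ?_⟩
  exact le_mul_of_one_le_left (by rw [relIS]; positivity) (by linarith)
end
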